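/- arXiv:0812.3318 — 11 statements merged into one kernel-verified Lean document; each statement's English description precedes it below -/
import Mathlib

section
/- For positive real parameters b₁, c₁, h₁, b₂, c₂, h₂, the map T(x,y) = (b₁·x/(1+x+c₁·y) + h₁, b₂·y/(1+y+c₂·x) + h₂) is injective on [0,∞)×[0,∞). -/
/-
Clearing denominators, equality of the first coordinates of `T (x, y)` and `T (x', y')` reads
`x - x' = -c₁ D` and equality of the second reads `y - y' = c₂ D`, with `D = x y' - x' y`.
If `D > 0` then `x < x'` and `y' < y`, which forces `D ≤ 0` on the closed quadrant; symmetrically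
for `D < 0`. Hence `D = 0`, and then `x = x'`, `y = y'`.
-/

section

variable {b c u v u' v' : ℝ}

lemma sub_eq_neg_mul_cross_of_div_eq (hb : 0 < b) (hc : 0 ≤ c)
    (hu : 0 ≤ u) (hv : 0 ≤ v) (hu' : 0 ≤ u') (hv' : 0 ≤ v')
    (h : b * u / (1 + u + c * v) = b * u' / (1 + u' + c * v')) :
    u - u' = -c * (u * v' - u' * v) := by
  rw [div_eq_div_iff (by positivity) (by positivity)] at h
  have h' : b * (u - u' + c * (u * v' - u' * v)) = b * 0 := by linear_combination h
  linear_combination mul_left_cancel₀ hb.ne' h'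

end

lemma cross_eq_zero_of_sub_eq {c₁ c₂ x y x' y' : ℝ} (hc₁ : 0 < c₁) (hc₂ : 0 < c₂)
    (hx' : 0 ≤ x') (hy' : 0 ≤ y')
    (h₁ : x - x' = -c₁ * (x * y' - x' * y)) (h₂ : y - y' = c₂ * (x * y' - x' * y)) :
    x * y' - x' * y = 0 := by
  rcases lt_trichotomy (x * y' - x' * y) 0 with hD | hD | hD
  · have hxx : x' < x := by nlinarith
    have hyy : y < y' := by nlinarith
    nlinarith [mul_le_mul_of_nonneg_left hyy.le hx', mul_le_mul_of_nonneg_right hxx.le hy']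
  · exact hD
  · have hxx : x < x' := by nlinarith
    have hyy : y' < y := by nlinarith
    nlinarith [mul_le_mul_of_nonneg_left hyy.le hx', mul_le_mul_of_nonneg_right hxx.le hy']

open Set in
theorem stmt4_general (b₁ c₁ h₁ b₂ c₂ h₂ : ℝ)
    (hb₁ : 0 < b₁) (hc₁ : 0 < c₁)
    (hb₂ : 0 < b₂) (hc₂ : 0 < c₂)
    (T : ℝ × ℝ → ℝ × ℝ)
    (hT : ∀ x y, T (x, y) =
      (b₁ * x / (1 + x + c₁ * y) + h₁, b₂ * y / (1 + y + c₂ * x) + h₂)) :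
    Set.InjOn T (Ici 0 ×ˢ Ici 0) := by
  rintro ⟨x, y⟩ ⟨hx, hy⟩ ⟨x', y'⟩ ⟨hx', hy'⟩ heq
  simp only [Set.mem_Ici] at hx hy hx' hy'
  rw [hT, hT, Prod.mk.injEq, add_left_inj, add_left_inj] at heq
  have e₁ := sub_eq_neg_mul_cross_of_div_eq hb₁ hc₁.le hx hy hx' hy' heq.1
  have e₂ : y - y' = c₂ * (x * y' - x' * y) := by
    linear_combination sub_eq_neg_mul_cross_of_div_eq hb₂ hc₂.le hy hx hy' hx' heq.2
  have hD := cross_eq_zero_of_sub_eq hc₁ hc₂ hx' hy' e₁ e₂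
  rw [hD, mul_zero, sub_eq_zero] at e₁ e₂
  rw [e₁, e₂]

open Set in
/-- The map `T(x,y) = (b₁x/(1+x+c₁y)+h₁, b₂y/(1+y+c₂x)+h₂)` is injective
on `[0,∞)×[0,∞)`. -/
theorem stmt4 (b₁ c₁ h₁ b₂ c₂ h₂ : ℝ)
    (hb₁ : 0 < b₁) (hc₁ : 0 < c₁) (hh₁ : 0 < h₁)
    (hb₂ : 0 < b₂) (hc₂ : 0 < c₂) (hh₂ : 0 < h₂)
    (T : ℝ × ℝ → ℝ × ℝ)
    (hT : ∀ x y, T (x, y) =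
      (b₁ * x / (1 + x + c₁ * y) + h₁, b₂ * y / (1 + y + c₂ * x) + h₂)) :
    Set.InjOn T (Ici 0 ×ˢ Ici 0) :=
  stmt4_general b₁ c₁ h₁ b₂ c₂ h₂ hb₁ hc₁ hb₂ hc₂ T hT
end

section
/- For positive real parameters b₁, c₁, h₁, b₂, c₂, h₂, define T on [0,∞)×[0,∞) by T(x,y) = (b₁·x/(1+x+c₁·y) + h₁, b₂·y/(1+y+c₂·x) + h₂). Then for every (x₀,y₀) ∈ [0,∞)×[0,∞) there exists a point (x̄,ȳ) ∈ [0,∞)×[0,∞) with T(x̄,ȳ) = (x̄,ȳ) such that the sequence of iterates Tⁿ(x₀,y₀) converges to (x̄,ȳ) as n → ∞. -/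
open Set Filter Topology Function

/-!
The map is competitive: it is monotone for the southeast order (`x ≤ x'`, `y' ≤ y`), so once
an orbit makes one southeast step, or one northwest step, all its later steps are of the same
kind. Otherwise every step is strictly northeast or strictly southwest, and the map cannot
follow a northeast step by a strictly southwest one, or the reverse: the two resulting
inequalities on the increments `Δx, Δy ≥ 0` multiply to
`Δx Δy (1 + c₁ y)(1 + c₂ x) < Δx Δy c₁ c₂ x y`, which is absurd. Either way both coordinates are
eventually monotone. After one step the orbit stays in the box `[0, b₁ + h₁] × [0, b₂ + h₂]`,
so it converges, and by continuity its limit is a fixed point.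
-/

section Competitive

variable {α β : Type*} [LinearOrder α] [LinearOrder β]

def CompetitiveOn (T : α × β → α × β) (s : Set (α × β)) : Prop :=
  ∀ p ∈ s, ∀ q ∈ s, p.1 ≤ q.1 ∧ q.2 ≤ p.2 → (T p).1 ≤ (T q).1 ∧ (T q).2 ≤ (T p).2

theorem rel_iterate_iterate_succ {γ : Type*} {T : γ → γ} {s : Set γ} {r : γ → γ → Prop}
    (hs : MapsTo T s s) (hr : ∀ p ∈ s, ∀ q ∈ s, r p q → r (T p) (T q)) {p : γ} (hp : p ∈ s)
    (h : r p (T p)) (n : ℕ) : r (T^[n] p) (T^[n + 1] p) := by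
  induction n generalizing p with
  | zero => exact h
  | succ n ih => exact ih (hs hp) (hr _ hp _ (hs hp) h)

theorem monotone_or_antitone_iterate {T : α × β → α × β} {s : Set (α × β)} (hs : MapsTo T s s)
    (hrev : ∀ p ∈ s, ∀ q ∈ s, p ≤ q → ¬((T q).1 < (T p).1 ∧ (T q).2 < (T p).2))
    {p : α × β} (hp : p ∈ s)
    (hSE : ∀ n, (T^[n] p).1 ≤ (T^[n + 1] p).1 → (T^[n] p).2 < (T^[n + 1] p).2)
    (hNW : ∀ n, (T^[n + 1] p).1 ≤ (T^[n] p).1 → (T^[n + 1] p).2 < (T^[n] p).2) :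
    Monotone (fun n => T^[n] p) ∨ Antitone (fun n => T^[n] p) := by
  set u : ℕ → α × β := fun n => T^[n] p
  have hrev' (m n : ℕ) (h : u m ≤ u n) :
      ¬((u (n + 1)).1 < (u (m + 1)).1 ∧ (u (n + 1)).2 < (u (m + 1)).2) := by
    simp only [u, iterate_succ_apply']
    exact hrev _ (hs.iterate m hp) _ (hs.iterate n hp) h
  by_cases h₀ : (u 0).1 ≤ (u 1).1
  · refine .inl (monotone_nat_of_le_succ fun n => ?_)
    induction n with
    | zero => exact Prod.le_def.2 ⟨h₀, (hSE 0 h₀).le⟩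
    | succ n ih =>
      by_cases h : (u (n + 1)).1 ≤ (u (n + 2)).1
      · exact Prod.le_def.2 ⟨h, (hSE _ h).le⟩
      · push Not at h
        exact absurd ⟨h, hNW _ h.le⟩ (hrev' n (n + 1) ih)
  · push Not at h₀
    refine .inr (antitone_nat_of_succ_le fun n => ?_)
    induction n with
    | zero => exact Prod.le_def.2 ⟨h₀.le, (hNW 0 h₀.le).le⟩
    | succ n ih =>
      by_cases h : (u (n + 2)).1 ≤ (u (n + 1)).1
      · exact Prod.le_def.2 ⟨h, (hNW _ h).le⟩
      · push Not at h
        exact absurd ⟨h, hSE _ h.le⟩ (hrev' (n + 1) n ih)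

theorem CompetitiveOn.exists_monotone_or_antitone_iterate {T : α × β → α × β}
    {s : Set (α × β)} (hT : CompetitiveOn T s) (hs : MapsTo T s s)
    (hrev : ∀ p ∈ s, ∀ q ∈ s, p ≤ q → ¬((T q).1 < (T p).1 ∧ (T q).2 < (T p).2))
    {p : α × β} (hp : p ∈ s) :
    ∃ N, (Monotone (fun n => (T^[n + N] p).1) ∨ Antitone (fun n => (T^[n + N] p).1)) ∧
      (Monotone (fun n => (T^[n + N] p).2) ∨ Antitone (fun n => (T^[n + N] p).2)) := by
  by_cases hSE : ∃ N, (T^[N] p).1 ≤ (T^[N + 1] p).1 ∧ (T^[N + 1] p).2 ≤ (T^[N] p).2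
  · obtain ⟨N, hN⟩ := hSE
    rw [iterate_succ_apply'] at hN
    have h := rel_iterate_iterate_succ hs hT (hs.iterate N hp) hN
    refine ⟨N, .inl (monotone_nat_of_le_succ fun n => ?_),
      .inr (antitone_nat_of_succ_le fun n => ?_)⟩
    · simpa only [iterate_add_apply] using (h n).1
    · simpa only [iterate_add_apply] using (h n).2
  by_cases hNW : ∃ N, (T^[N + 1] p).1 ≤ (T^[N] p).1 ∧ (T^[N] p).2 ≤ (T^[N + 1] p).2
  · obtain ⟨N, hN⟩ := hNW
    rw [iterate_succ_apply'] at hN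
    have h := rel_iterate_iterate_succ (r := fun p q => (q.1 ≤ p.1 ∧ p.2 ≤ q.2)) hs
      (fun p hp q hq => hT q hq p hp) (hs.iterate N hp) hN
    refine ⟨N, .inr (antitone_nat_of_succ_le fun n => ?_),
      .inl (monotone_nat_of_le_succ fun n => ?_)⟩
    · simpa only [iterate_add_apply] using (h n).1
    · simpa only [iterate_add_apply] using (h n).2
  push Not at hSE hNW
  refine ⟨0, ?_⟩
  rcases monotone_or_antitone_iterate hs hrev hp hSE hNW with h | h
  · exact ⟨.inl (monotone_fst.comp h), .inl (monotone_snd.comp h)⟩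
  · exact ⟨.inr (monotone_fst.comp_antitone h), .inr (monotone_snd.comp_antitone h)⟩

end Competitive

theorem exists_tendsto_of_monotone_or_antitone {f : ℕ → ℝ} {a b : ℝ}
    (hf : Monotone f ∨ Antitone f) (hab : ∀ n, f n ∈ Icc a b) :
    ∃ l ∈ Icc a b, Tendsto f atTop (𝓝 l) := by
  obtain ⟨l, hl⟩ : ∃ l, Tendsto f atTop (𝓝 l) := by
    rcases hf with hf | hf
    · exact ⟨_, tendsto_atTop_ciSup hf ⟨b, forall_mem_range.2 fun n => (hab n).2⟩⟩
    · exact ⟨_, tendsto_atTop_ciInf hf ⟨a, forall_mem_range.2 fun n => (hab n).1⟩⟩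
  exact ⟨l, isClosed_Icc.mem_of_tendsto hl (.of_forall hab), hl⟩

theorem exists_tendsto_of_monotone_or_antitone_prod {u : ℕ → ℝ × ℝ} {a₁ b₁ a₂ b₂ : ℝ}
    (h₁ : Monotone (fun n => (u n).1) ∨ Antitone (fun n => (u n).1))
    (h₂ : Monotone (fun n => (u n).2) ∨ Antitone (fun n => (u n).2))
    (hu : ∀ n, u n ∈ Icc a₁ b₁ ×ˢ Icc a₂ b₂) :
    ∃ q ∈ Icc a₁ b₁ ×ˢ Icc a₂ b₂, Tendsto u atTop (𝓝 q) := by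
  obtain ⟨x, hx, hux⟩ := exists_tendsto_of_monotone_or_antitone h₁ fun n => (hu n).1
  obtain ⟨y, hy, huy⟩ := exists_tendsto_of_monotone_or_antitone h₂ fun n => (hu n).2
  exact ⟨(x, y), ⟨hx, hy⟩, hux.prodMk_nhds huy⟩

noncomputable def lgin (b c h x y : ℝ) : ℝ := b * x / (1 + x + c * y) + h

noncomputable def lginMap (b₁ c₁ h₁ b₂ c₂ h₂ : ℝ) (q : ℝ × ℝ) : ℝ × ℝ :=
  (lgin b₁ c₁ h₁ q.1 q.2, lgin b₂ c₂ h₂ q.2 q.1)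

section lgin

variable {b c h x y x' y' : ℝ}

theorem lgin_denom_pos (hc : 0 ≤ c) (hx : 0 ≤ x) (hy : 0 ≤ y) : 0 < 1 + x + c * y := by
  positivity

theorem lgin_mem_Icc (hb : 0 ≤ b) (hc : 0 ≤ c) (hh : 0 ≤ h) (hx : 0 ≤ x) (hy : 0 ≤ y) :
    lgin b c h x y ∈ Icc 0 (b + h) := by
  have hd := lgin_denom_pos hc hx hy
  have : b * x / (1 + x + c * y) ≤ b := by
    rw [div_le_iff₀ hd]
    nlinarith [mul_nonneg hb (mul_nonneg hc hy)]
  constructor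
  · unfold lgin; positivity
  · unfold lgin; linarith

theorem lgin_le_lgin (hb : 0 ≤ b) (hc : 0 ≤ c) (hx : 0 ≤ x) (hy' : 0 ≤ y') (hxx : x ≤ x')
    (hyy : y' ≤ y) : lgin b c h x y ≤ lgin b c h x' y' := by
  unfold lgin
  gcongr ?_ + h
  rw [div_le_div_iff₀ (lgin_denom_pos hc hx (hy'.trans hyy))
    (lgin_denom_pos hc (hx.trans hxx) hy')]
  nlinarith [mul_le_mul hxx hyy hy' (hx.trans hxx), mul_nonneg hb hc]

theorem sub_mul_lt_of_lgin_lt (hb : 0 < b) (hc : 0 ≤ c) (hx : 0 ≤ x) (hy : 0 ≤ y)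
    (hx' : 0 ≤ x') (hy' : 0 ≤ y') (hlt : lgin b c h x' y' < lgin b c h x y) :
    (x' - x) * (1 + c * y) < c * x * (y' - y) := by
  unfold lgin at hlt
  rw [add_lt_add_iff_right, div_lt_div_iff₀ (lgin_denom_pos hc hx' hy')
    (lgin_denom_pos hc hx hy)] at hlt
  refine lt_of_mul_lt_mul_left ?_ hb.le
  linarith

end lgin

section lginMap

variable {b₁ c₁ h₁ b₂ c₂ h₂ : ℝ}

theorem mapsTo_lginMap (hb₁ : 0 ≤ b₁) (hc₁ : 0 ≤ c₁) (hh₁ : 0 ≤ h₁) (hb₂ : 0 ≤ b₂)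
    (hc₂ : 0 ≤ c₂) (hh₂ : 0 ≤ h₂) :
    MapsTo (lginMap b₁ c₁ h₁ b₂ c₂ h₂) (Ici 0 ×ˢ Ici 0) (Icc 0 (b₁ + h₁) ×ˢ Icc 0 (b₂ + h₂)) :=
  fun _ ⟨hx, hy⟩ => ⟨lgin_mem_Icc hb₁ hc₁ hh₁ hx hy, lgin_mem_Icc hb₂ hc₂ hh₂ hy hx⟩

theorem competitiveOn_lginMap (hb₁ : 0 ≤ b₁) (hc₁ : 0 ≤ c₁) (hb₂ : 0 ≤ b₂) (hc₂ : 0 ≤ c₂) :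
    CompetitiveOn (lginMap b₁ c₁ h₁ b₂ c₂ h₂) (Ici 0 ×ˢ Ici 0) :=
  fun _ ⟨hx, _⟩ _ ⟨_, hy'⟩ ⟨hxx, hyy⟩ =>
    ⟨lgin_le_lgin hb₁ hc₁ hx hy' hxx hyy, lgin_le_lgin hb₂ hc₂ hy' hx hyy hxx⟩

theorem continuousAt_lginMap (hc₁ : 0 ≤ c₁) (hc₂ : 0 ≤ c₂) {q : ℝ × ℝ}
    (hq : q ∈ Ici 0 ×ˢ Ici 0) : ContinuousAt (lginMap b₁ c₁ h₁ b₂ c₂ h₂) q := by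
  have h₁ := (lgin_denom_pos hc₁ hq.1 hq.2).ne'
  have h₂ := (lgin_denom_pos hc₂ hq.2 hq.1).ne'
  unfold lginMap lgin
  fun_prop (disch := assumption)

theorem not_lginMap_lt_and_lt_of_le (hb₁ : 0 < b₁) (hc₁ : 0 ≤ c₁) (hb₂ : 0 < b₂) (hc₂ : 0 ≤ c₂)
    {p q : ℝ × ℝ} (hp : p ∈ Ici 0 ×ˢ Ici 0) (hpq : p ≤ q) :
    ¬((lginMap b₁ c₁ h₁ b₂ c₂ h₂ q).1 < (lginMap b₁ c₁ h₁ b₂ c₂ h₂ p).1 ∧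
      (lginMap b₁ c₁ h₁ b₂ c₂ h₂ q).2 < (lginMap b₁ c₁ h₁ b₂ c₂ h₂ p).2) := by
  rintro ⟨hlt₁, hlt₂⟩
  obtain ⟨hx, hy⟩ : 0 ≤ p.1 ∧ 0 ≤ p.2 := hp
  obtain ⟨hxx, hyy⟩ := hpq
  have hdx := sub_nonneg.2 hxx
  have hdy := sub_nonneg.2 hyy
  have e₁ := sub_mul_lt_of_lgin_lt hb₁ hc₁ hx hy (hx.trans hxx) (hy.trans hyy) hlt₁
  have e₂ := sub_mul_lt_of_lgin_lt hb₂ hc₂ hy hx (hy.trans hyy) (hx.trans hxx) hlt₂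
  have := mul_lt_mul'' e₁ e₂ (by positivity) (by positivity)
  nlinarith [mul_nonneg (mul_nonneg hdx hdy) (add_nonneg (mul_nonneg hc₁ hy) (mul_nonneg hc₂ hx))]

end lginMap

open Set Filter in
/-- Every orbit of the map `T(x,y) = (b₁x/(1+x+c₁y)+h₁, b₂y/(1+y+c₂x)+h₂)`
starting in `[0,∞)×[0,∞)` converges to a fixed point of `T`. -/
theorem stmt6 (b₁ c₁ h₁ b₂ c₂ h₂ : ℝ)
    (hb₁ : 0 < b₁) (hc₁ : 0 < c₁) (hh₁ : 0 < h₁)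
    (hb₂ : 0 < b₂) (hc₂ : 0 < c₂) (hh₂ : 0 < h₂)
    (T : ℝ × ℝ → ℝ × ℝ)
    (hT : ∀ x y, T (x, y) =
      (b₁ * x / (1 + x + c₁ * y) + h₁, b₂ * y / (1 + y + c₂ * x) + h₂)) :
    ∀ p ∈ Ici (0:ℝ) ×ˢ Ici (0:ℝ), ∃ q ∈ Ici (0:ℝ) ×ˢ Ici (0:ℝ),
      T q = q ∧ Tendsto (fun n => T^[n] p) atTop (nhds q) := by
  intro p hp
  obtain rfl : T = lginMap b₁ c₁ h₁ b₂ c₂ h₂ := funext fun q => hT q.1 q.2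
  have hbox := mapsTo_lginMap hb₁.le hc₁.le hh₁.le hb₂.le hc₂.le hh₂.le
  have hquad := hbox.mono_right (prod_mono Icc_subset_Ici_self Icc_subset_Ici_self)
  obtain ⟨N, hN₁, hN₂⟩ := CompetitiveOn.exists_monotone_or_antitone_iterate
    (competitiveOn_lginMap hb₁.le hc₁.le hb₂.le hc₂.le) hquad
    (fun _ hp _ _ hpq => not_lginMap_lt_and_lt_of_le hb₁ hc₁.le hb₂ hc₂.le hp hpq) (hquad hp)
  obtain ⟨q, hq, hlim⟩ := exists_tendsto_of_monotone_or_antitone_prod hN₁ hN₂ fun n => by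
    rw [← iterate_succ_apply, iterate_succ_apply']
    exact hbox (hquad.iterate _ hp)
  replace hlim := (tendsto_add_atTop_iff_nat (f := fun n => _^[n] p) (N + 1)).1 hlim
  have hq' := prod_mono Icc_subset_Ici_self Icc_subset_Ici_self hq
  exact ⟨q, hq', isFixedPt_of_tendsto_iterate hlim (continuousAt_lginMap hc₁.le hc₂.le hq'),
    hlim⟩
end

section
/- Let b₁, c₁, h₁, b₂, c₂, h₂ be positive reals, and let C₁ = {(x,y) ∈ ℝ² : x² + c₁·x·y + (1−b₁−h₁)·x − c₁·h₁·y − h₁ = 0} and C₂ = {(x,y) ∈ ℝ² : y² + c₂·x·y + (1−b₂−h₂)·y − c₂·h₂·x − h₂ = 0}. Then: (1) if (x,y), (x′,y′) ∈ C₁ with x < x′ and either both x, x′ < h₁ or both x, x′ > h₁, then y > y′; (2) if (x,y), (x′,y′) ∈ C₂ with y < y′ and either both y, y′ < h₂ or both y, y′ > h₂, then x > x′. In other words, each branch of C₁ and of C₂ is the graph of a strictly decreasing function. -/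
/-!
Write `E(x, y) = x² + cxy + (1 − b − h)x − chy − h` for the equation of `C₁`. For two points of
`C₁` the combination `(x' − h)·E(x, y) − (x − h)·E(x', y')` eliminates the quadratic terms and gives
`c (x − h)(x' − h)(y − y') = (x' − x)((x − h)(x' − h) + bh)`.
On one side of the asymptote `x = h` the product `(x − h)(x' − h)` is positive, so `y − y'` has the
sign of `x' − x`. The curve `C₂` is `C₁` with the roles of `x` and `y` exchanged.
-/

section CriticalCurve

variable {b c h x y x' y' : ℝ}

lemma critical_curve_chord_identity
    (hxy : x ^ 2 + c * x * y + (1 - b - h) * x - c * h * y - h = 0)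
    (hxy' : x' ^ 2 + c * x' * y' + (1 - b - h) * x' - c * h * y' - h = 0) :
    c * ((x - h) * (x' - h)) * (y - y') = (x' - x) * ((x - h) * (x' - h) + b * h) := by
  linear_combination (x' - h) * hxy - (x - h) * hxy'

lemma sub_mul_sub_pos_of_same_side (hside : (x < h ∧ x' < h) ∨ (h < x ∧ h < x')) :
    0 < (x - h) * (x' - h) := by
  rcases hside with ⟨hx, hx'⟩ | ⟨hx, hx'⟩
  · exact mul_pos_of_neg_of_neg (sub_neg.mpr hx) (sub_neg.mpr hx')
  · exact mul_pos (sub_pos.mpr hx) (sub_pos.mpr hx')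

lemma critical_curve_branch_antitone (hb : 0 < b) (hc : 0 < c) (hh : 0 < h)
    (hxy : x ^ 2 + c * x * y + (1 - b - h) * x - c * h * y - h = 0)
    (hxy' : x' ^ 2 + c * x' * y' + (1 - b - h) * x' - c * h * y' - h = 0)
    (hlt : x < x') (hside : (x < h ∧ x' < h) ∨ (h < x ∧ h < x')) : y' < y := by
  have hprod := sub_mul_sub_pos_of_same_side hside
  have hrhs : 0 < (x' - x) * ((x - h) * (x' - h) + b * h) :=
    mul_pos (sub_pos.mpr hlt) (add_pos hprod (mul_pos hb hh))
  rw [← critical_curve_chord_identity hxy hxy'] at hrhs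
  exact sub_pos.mp (pos_of_mul_pos_right hrhs (mul_pos hc hprod).le)

end CriticalCurve

/-- All branches of the critical curves
`C₁ = {x² + c₁xy + (1−b₁−h₁)x − c₁h₁y − h₁ = 0}` and
`C₂ = {y² + c₂xy + (1−b₂−h₂)y − c₂h₂x − h₂ = 0}` are graphs of strictly
decreasing functions: on `C₁`, on either side of the asymptote `x = h₁`,
larger `x` forces smaller `y`; on `C₂`, on either side of the asymptote
`y = h₂`, larger `y` forces smaller `x`. -/
theorem stmt7 (b₁ c₁ h₁ b₂ c₂ h₂ : ℝ)
    (hb₁ : 0 < b₁) (hc₁ : 0 < c₁) (hh₁ : 0 < h₁)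
    (hb₂ : 0 < b₂) (hc₂ : 0 < c₂) (hh₂ : 0 < h₂) :
    (∀ x y x' y' : ℝ,
      x ^ 2 + c₁ * x * y + (1 - b₁ - h₁) * x - c₁ * h₁ * y - h₁ = 0 →
      x' ^ 2 + c₁ * x' * y' + (1 - b₁ - h₁) * x' - c₁ * h₁ * y' - h₁ = 0 →
      x < x' → ((x < h₁ ∧ x' < h₁) ∨ (h₁ < x ∧ h₁ < x')) → y' < y) ∧
    (∀ x y x' y' : ℝ,
      y ^ 2 + c₂ * x * y + (1 - b₂ - h₂) * y - c₂ * h₂ * x - h₂ = 0 →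
      y' ^ 2 + c₂ * x' * y' + (1 - b₂ - h₂) * y' - c₂ * h₂ * x' - h₂ = 0 →
      y < y' → ((y < h₂ ∧ y' < h₂) ∨ (h₂ < y ∧ h₂ < y')) → x' < x) := by
  refine ⟨fun x y x' y' hxy hxy' hlt hside ↦
    critical_curve_branch_antitone hb₁ hc₁ hh₁ hxy hxy' hlt hside, ?_⟩
  intro x y x' y' hxy hxy' hlt hside
  refine critical_curve_branch_antitone hb₂ hc₂ hh₂ ?_ ?_ hlt hside
  · linear_combination hxy
  · linear_combination hxy'
end

section
/- Let b₁, c₁, h₁, b₂, c₂, h₂ be positive reals and define T on [0,∞)×[0,∞) by T(x,y) = (b₁·x/(1+x+c₁·y) + h₁, b₂·y/(1+y+c₂·x) + h₂). Then there exists a point (x̄,ȳ) with h₁ ≤ x̄ ≤ h₁ + b₁ and h₂ ≤ ȳ ≤ h₂ + b₂ such that T(x̄,ȳ) = (x̄,ȳ). In particular the quadrant Q₁(h₁,h₂) = {(x,y) : x ≥ h₁, y ≥ h₂} contains at least one equilibrium of the system (LGIN). -/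
/-!
The system is competitive: the first component of `T` increases in `x` and decreases in `y`,
the second the other way round, and `T` maps the box `[h₁, h₁ + b₁] × [h₂, h₂ + b₂]` into
itself. Ordering the box by `x` upwards and `y` downwards makes `T` a monotone self-map of a
complete lattice, so Knaster–Tarski gives a fixed point.
-/

open Set OrderDual

theorem exists_fixedPoint_of_competitive {α β : Type*}
    [ConditionallyCompleteLattice α] [ConditionallyCompleteLattice β]
    {a₁ b₁ : α} {a₂ b₂ : β} (h₁ : a₁ ≤ b₁) (h₂ : a₂ ≤ b₂) (f : α → β → α) (g : α → β → β)
    (hf : ∀ x ∈ Icc a₁ b₁, ∀ y ∈ Icc a₂ b₂, f x y ∈ Icc a₁ b₁)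
    (hg : ∀ x ∈ Icc a₁ b₁, ∀ y ∈ Icc a₂ b₂, g x y ∈ Icc a₂ b₂)
    (hf_mono : ∀ x ∈ Icc a₁ b₁, ∀ x' ∈ Icc a₁ b₁, ∀ y ∈ Icc a₂ b₂, ∀ y' ∈ Icc a₂ b₂,
      x ≤ x' → y' ≤ y → f x y ≤ f x' y')
    (hg_anti : ∀ x ∈ Icc a₁ b₁, ∀ x' ∈ Icc a₁ b₁, ∀ y ∈ Icc a₂ b₂, ∀ y' ∈ Icc a₂ b₂,
      x ≤ x' → y' ≤ y → g x' y' ≤ g x y) :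
    ∃ x ∈ Icc a₁ b₁, ∃ y ∈ Icc a₂ b₂, f x y = x ∧ g x y = y := by
  have := Fact.mk h₁
  have := Fact.mk h₂
  let I := Icc a₁ b₁
  let J := Icc a₂ b₂
  let F : I × Jᵒᵈ →o I × Jᵒᵈ :=
    { toFun := fun p =>
        (⟨f p.1 (ofDual p.2 : J), hf _ p.1.2 _ (ofDual p.2 : J).2⟩,
          toDual ⟨g p.1 (ofDual p.2 : J), hg _ p.1.2 _ (ofDual p.2 : J).2⟩)
      monotone' := fun p q hpq =>
        ⟨hf_mono _ p.1.2 _ q.1.2 _ (ofDual p.2 : J).2 _ (ofDual q.2 : J).2 hpq.1 hpq.2,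
          hg_anti _ p.1.2 _ q.1.2 _ (ofDual p.2 : J).2 _ (ofDual q.2 : J).2 hpq.1 hpq.2⟩ }
  obtain ⟨⟨x, y⟩, hxy⟩ : ∃ p, F p = p := ⟨F.lfp, F.map_lfp⟩
  exact ⟨x, x.2, (ofDual y : J), (ofDual y : J).2, congrArg (fun p => (p.1 : α)) hxy,
    congrArg (fun p : I × Jᵒᵈ => ((ofDual p.2 : J) : β)) hxy⟩

section Response

variable {b c x x' y y' : ℝ}

theorem mul_div_one_add_add_mul_nonneg (hb : 0 ≤ b) (hc : 0 ≤ c) (hx : 0 ≤ x) (hy : 0 ≤ y) :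
    0 ≤ b * x / (1 + x + c * y) := by
  positivity

theorem mul_div_one_add_add_mul_le (hb : 0 ≤ b) (hc : 0 ≤ c) (hx : 0 ≤ x) (hy : 0 ≤ y) :
    b * x / (1 + x + c * y) ≤ b := by
  rw [div_le_iff₀ (by positivity)]
  nlinarith [mul_nonneg hb (mul_nonneg hc hy)]

theorem mul_div_one_add_add_mul_le_of_le_of_ge (hb : 0 ≤ b) (hc : 0 ≤ c) (hx : 0 ≤ x)
    (hy' : 0 ≤ y') (hxx : x ≤ x') (hyy : y' ≤ y) :
    b * x / (1 + x + c * y) ≤ b * x' / (1 + x' + c * y') := by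
  rw [div_le_div_iff₀ (by nlinarith [mul_nonneg hc hy']) (by nlinarith [mul_nonneg hc hy'])]
  nlinarith [mul_le_mul_of_nonneg_left (mul_le_mul hxx hyy hy' (hx.trans hxx)) (mul_nonneg hb hc),
    mul_le_mul_of_nonneg_left hxx hb]

end Response

/-- The map `T(x,y) = (b₁x/(1+x+c₁y)+h₁, b₂y/(1+y+c₂x)+h₂)` has a fixed point
in the box `[h₁, h₁+b₁] × [h₂, h₂+b₂]`; in particular the quadrant
`Q₁(h₁,h₂)` contains at least one equilibrium. -/
theorem stmt9 (b₁ c₁ h₁ b₂ c₂ h₂ : ℝ)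
    (hb₁ : 0 < b₁) (hc₁ : 0 < c₁) (hh₁ : 0 < h₁)
    (hb₂ : 0 < b₂) (hc₂ : 0 < c₂) (hh₂ : 0 < h₂)
    (T : ℝ × ℝ → ℝ × ℝ)
    (hT : ∀ x y, T (x, y) =
      (b₁ * x / (1 + x + c₁ * y) + h₁, b₂ * y / (1 + y + c₂ * x) + h₂)) :
    ∃ xs ys : ℝ, h₁ ≤ xs ∧ xs ≤ h₁ + b₁ ∧ h₂ ≤ ys ∧ ys ≤ h₂ + b₂ ∧
      T (xs, ys) = (xs, ys) := by
  have maps_to {b c h h' x y : ℝ} (hb : 0 < b) (hc : 0 < c) (hx : h ≤ x) (hh : 0 < h)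
      (hy : h' ≤ y) (hh' : 0 < h') : b * x / (1 + x + c * y) + h ∈ Icc h (h + b) :=
    have hx₀ : 0 ≤ x := by linarith
    have hy₀ : 0 ≤ y := by linarith
    ⟨by linarith [mul_div_one_add_add_mul_nonneg hb.le hc.le hx₀ hy₀],
      by linarith [mul_div_one_add_add_mul_le hb.le hc.le hx₀ hy₀]⟩
  obtain ⟨x, ⟨hx₁, hx₂⟩, y, ⟨hy₁, hy₂⟩, hfx, hgy⟩ := exists_fixedPoint_of_competitive
    (le_add_of_nonneg_right hb₁.le) (le_add_of_nonneg_right hb₂.le)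
    (fun x y => b₁ * x / (1 + x + c₁ * y) + h₁) (fun x y => b₂ * y / (1 + y + c₂ * x) + h₂)
    (fun x hx y hy => maps_to hb₁ hc₁ hx.1 hh₁ hy.1 hh₂)
    (fun x hx y hy => maps_to hb₂ hc₂ hy.1 hh₂ hx.1 hh₁)
    (fun x hx x' _ y _ y' hy' hxx hyy => add_le_add_left
      (mul_div_one_add_add_mul_le_of_le_of_ge hb₁.le hc₁.le (hh₁.le.trans hx.1)
        (hh₂.le.trans hy'.1) hxx hyy) h₁)
    (fun x hx x' _ y _ y' hy' hxx hyy => add_le_add_left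
      (mul_div_one_add_add_mul_le_of_le_of_ge hb₂.le hc₂.le (hh₂.le.trans hy'.1)
        (hh₁.le.trans hx.1) hyy hxx) h₂)
  exact ⟨x, y, hx₁, hx₂, hy₁, hy₂, by rw [hT, hfx, hgy]⟩
end

section
/- Let b₁, c₁, h₁, b₂, c₂, h₂ be positive reals. Then there exists a point (x,y) ∈ ℝ² with x ≤ h₁ and y ≤ h₂ satisfying simultaneously x² + c₁·x·y + (1−b₁−h₁)·x − c₁·h₁·y − h₁ = 0 and y² + c₂·x·y + (1−b₂−h₂)·y − c₂·h₂·x − h₂ = 0; that is, the quadrant Q₃(h₁,h₂) = {(x,y) : x ≤ h₁, y ≤ h₂} contains at least one intersection point of the critical curves C₁ and C₂. -/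
/-!
For every `x` the second critical polynomial, viewed as a monic quadratic in `y`, equals
`-b₂h₂ < 0` at `y = h₂`; hence its smaller root `Y x` exists, satisfies `Y x ≤ h₂` and depends
continuously on `x`. Along the curve `x ↦ (x, Y x) ⊆ C₂` the first critical polynomial equals
`-b₁h₁ ≤ 0` at `x = h₁` (the `y`-terms cancel there) and is nonnegative at `x = -(2 + c₁h₂)`
because `Y ≤ h₂`, so the intermediate value theorem gives an intersection point with `x ≤ h₁`.
-/

noncomputable def lowerRoot (p q : ℝ) : ℝ := (-p - √(p ^ 2 - 4 * q)) / 2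

theorem lowerRoot_sq_add_mul_add {p q : ℝ} (h : 0 ≤ p ^ 2 - 4 * q) :
    lowerRoot p q ^ 2 + p * lowerRoot p q + q = 0 := by
  have hs := Real.sq_sqrt h
  unfold lowerRoot
  linear_combination hs / 4

theorem lowerRoot_le {p q t : ℝ} (h : t ^ 2 + p * t + q ≤ 0) : lowerRoot p q ≤ t := by
  have hsq : (2 * t + p) ^ 2 ≤ p ^ 2 - 4 * q := by nlinarith
  have habs : |2 * t + p| ≤ √(p ^ 2 - 4 * q) := Real.abs_le_sqrt hsq
  unfold lowerRoot
  linarith [neg_abs_le (2 * t + p)]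

theorem Continuous.lowerRoot {X : Type*} [TopologicalSpace X] {p q : X → ℝ}
    (hp : Continuous p) (hq : Continuous q) : Continuous fun x => lowerRoot (p x) (q x) := by
  unfold _root_.lowerRoot
  fun_prop

theorem exists_continuous_root_le {X : Type*} [TopologicalSpace X] {p q : X → ℝ}
    (hp : Continuous p) (hq : Continuous q) {t : ℝ} (ht : ∀ x, t ^ 2 + p x * t + q x ≤ 0) :
    ∃ Y : X → ℝ, Continuous Y ∧ ∀ x, Y x ≤ t ∧ Y x ^ 2 + p x * Y x + q x = 0 := by
  refine ⟨fun x => lowerRoot (p x) (q x), hp.lowerRoot hq, fun x => ⟨lowerRoot_le (ht x), ?_⟩⟩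
  have hdisc : 0 ≤ p x ^ 2 - 4 * q x := by nlinarith [ht x, sq_nonneg (2 * t + p x)]
  exact lowerRoot_sq_add_mul_add hdisc

theorem exists_le_firstCritical_eq_zero_of_le {b c h t : ℝ} (hb : 0 ≤ b) (hc : 0 ≤ c)
    (hh : 0 ≤ h) (ht : 0 ≤ t) {Y : ℝ → ℝ} (hYc : Continuous Y) (hY : ∀ x, Y x ≤ t) :
    ∃ x ≤ h, x ^ 2 + c * x * Y x + (1 - b - h) * x - c * h * Y x - h = 0 := by
  set F : ℝ → ℝ := fun x => x ^ 2 + c * x * Y x + (1 - b - h) * x - c * h * Y x - h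
  set a : ℝ := -(2 + c * t)
  have hah : a ≤ h := by nlinarith
  have hFh : F h ≤ 0 := by
    have hval : F h = -(b * h) := by ring
    rw [hval]
    exact neg_nonpos.mpr (mul_nonneg hb hh)
  have hFa : 0 ≤ F a := by
    have hY_gap : 0 ≤ c * (h - a) * (t - Y a) :=
      mul_nonneg (mul_nonneg hc (by linarith)) (by linarith [hY a])
    have hval : F a = (h - a) - b * a + c * (h - a) * (t - Y a) := by ring
    have hba : 0 ≤ b * -a := mul_nonneg hb (by simp only [a, neg_neg]; positivity)
    rw [hval]
    linarith
  obtain ⟨x, hx, hFx⟩ :=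
    intermediate_value_Icc' hah (by fun_prop : Continuous F).continuousOn ⟨hFh, hFa⟩
  exact ⟨x, hx.2, hFx⟩

theorem stmt10_general (b₁ c₁ h₁ b₂ c₂ h₂ : ℝ)
    (hb₁ : 0 < b₁) (hc₁ : 0 < c₁) (hh₁ : 0 < h₁)
    (hb₂ : 0 < b₂) (hh₂ : 0 < h₂) :
    ∃ x y : ℝ, x ≤ h₁ ∧ y ≤ h₂ ∧
      x ^ 2 + c₁ * x * y + (1 - b₁ - h₁) * x - c₁ * h₁ * y - h₁ = 0 ∧
      y ^ 2 + c₂ * x * y + (1 - b₂ - h₂) * y - c₂ * h₂ * x - h₂ = 0 := by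
  obtain ⟨Y, hYc, hY⟩ := exists_continuous_root_le (t := h₂)
    (p := fun x => c₂ * x + (1 - b₂ - h₂)) (q := fun x => -(c₂ * h₂ * x + h₂))
    (by fun_prop) (by fun_prop) (fun x => by nlinarith)
  obtain ⟨x, hx, hC₁⟩ := exists_le_firstCritical_eq_zero_of_le hb₁.le hc₁.le hh₁.le hh₂.le hYc
    (fun x => (hY x).1)
  refine ⟨x, Y x, hx, (hY x).1, hC₁, ?_⟩
  linear_combination (hY x).2

/-- The critical curves
`C₁ = {x² + c₁xy + (1−b₁−h₁)x − c₁h₁y − h₁ = 0}` and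
`C₂ = {y² + c₂xy + (1−b₂−h₂)y − c₂h₂x − h₂ = 0}` intersect in the quadrant
`Q₃(h₁,h₂) = {(x,y) : x ≤ h₁, y ≤ h₂}`. -/
theorem stmt10 (b₁ c₁ h₁ b₂ c₂ h₂ : ℝ)
    (hb₁ : 0 < b₁) (hc₁ : 0 < c₁) (hh₁ : 0 < h₁)
    (hb₂ : 0 < b₂) (hc₂ : 0 < c₂) (hh₂ : 0 < h₂) :
    ∃ x y : ℝ, x ≤ h₁ ∧ y ≤ h₂ ∧
      x ^ 2 + c₁ * x * y + (1 - b₁ - h₁) * x - c₁ * h₁ * y - h₁ = 0 ∧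
      y ^ 2 + c₂ * x * y + (1 - b₂ - h₂) * y - c₂ * h₂ * x - h₂ = 0 :=
  stmt10_general b₁ c₁ h₁ b₂ c₂ h₂ hb₁ hc₁ hh₁ hb₂ hh₂
end

section
/- Let p be a real analytic function defined and strictly monotone on a neighborhood of x₀ ∈ ℝ, and let q be a real analytic function defined and strictly monotone on a neighborhood of y₀ ∈ ℝ, with p(x₀) = y₀ and q(y₀) = x₀. Assume that q ∘ p is not the identity function on any neighborhood of x₀ and that p ∘ q is not the identity function on any neighborhood of y₀. Let d_x be the multiplicity (order of vanishing) of x₀ as a zero of the analytic function x ↦ x − q(p(x)), and let d_y be the multiplicity of y₀ as a zero of the analytic function y ↦ y − p(q(y)). Then d_x = d_y, and both are finite. -/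
/-!
Write `φ = id - q ∘ p` and `ψ = id - p ∘ q`. If `p'(x₀) = 0` or `q'(y₀) = 0`, then
`φ'(x₀) = ψ'(y₀) = 1`, so both orders are `1`. Otherwise `ψ ∘ p` has the same order at `x₀` as `ψ`
at `y₀`, and `ψ ∘ p = p ∘ id - p ∘ (q ∘ p)` vanishes at least to the order of `id - q ∘ p = φ`,
because `G ∘ A - G ∘ B` vanishes at least to the order of `A - B` whenever `G` is analytic
(differentiate and induct on the order). By symmetry the two orders agree, and they are finite
since `q ∘ p` is not locally the identity.
-/

open Filter Topology

theorem analyticOrderAt_id_sub_comp_eq_one {𝕜 : Type*} [NontriviallyNormedField 𝕜]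
    {p q : 𝕜 → 𝕜} {x₀ y₀ : 𝕜} (hp : AnalyticAt 𝕜 p x₀) (hq : AnalyticAt 𝕜 q y₀)
    (hpx : p x₀ = y₀) (hqy : q y₀ = x₀) (h : deriv q y₀ * deriv p x₀ ≠ 1) :
    analyticOrderAt (fun x => x - q (p x)) x₀ = 1 := by
  subst hpx
  have hd : HasDerivAt (fun x => x - q (p x)) (1 - deriv q (p x₀) * deriv p x₀) x₀ :=
    (hasDerivAt_id' x₀).sub (hq.differentiableAt.hasDerivAt.comp x₀ hp.differentiableAt.hasDerivAt)
  exact (analyticAt_id.fun_sub (hq.comp hp)).analyticOrderAt_eq_one_of_zero_deriv_ne_zero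
    (by simp [hqy]) (hd.deriv.trans_ne (sub_ne_zero.mpr h.symm))

section

variable {𝕜 E : Type*} [NontriviallyNormedField 𝕜] [NormedAddCommGroup E] [NormedSpace 𝕜 E]
  [CharZero 𝕜] [CompleteSpace 𝕜] [CompleteSpace E]

theorem analyticOrderAt_sub_le_analyticOrderAt_comp_sub {G : 𝕜 → E} {A B : 𝕜 → 𝕜} {x₀ c : 𝕜}
    (hG : AnalyticAt 𝕜 G c) (hA : AnalyticAt 𝕜 A x₀) (hB : AnalyticAt 𝕜 B x₀)
    (hAc : A x₀ = c) (hBc : B x₀ = c) :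
    analyticOrderAt (fun x => A x - B x) x₀ ≤
      analyticOrderAt (fun x => G (A x) - G (B x)) x₀ := by
  refine ENat.forall_natCast_le_iff_le.mp fun n => ?_
  induction n generalizing G with
  | zero => simp
  | succ n ih =>
    intro hn
    have hnAB : (n : ℕ∞) ≤ analyticOrderAt (fun x => A x - B x) x₀ :=
      le_trans (Nat.cast_le.mpr n.le_succ) hn
    have hGA : AnalyticAt 𝕜 (fun x => G (A x)) x₀ := (hAc ▸ hG).comp hA
    have hGB : AnalyticAt 𝕜 (fun x => G (B x)) x₀ := (hBc ▸ hG).comp hB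
    have hG'A : AnalyticAt 𝕜 (fun x => deriv G (A x)) x₀ := (hAc ▸ hG.deriv).comp hA
    have hG'B : AnalyticAt 𝕜 (fun x => deriv G (B x)) x₀ := (hBc ▸ hG.deriv).comp hB
    push_cast at hn ⊢
    rw [← analyticOrderAt_deriv_ge_iff (hA.fun_sub hB) (by simp [hAc, hBc])] at hn
    rw [← analyticOrderAt_deriv_ge_iff (hGA.fun_sub hGB) (by simp [hAc, hBc])]
    have hderiv_AB : deriv (fun x => A x - B x) =ᶠ[𝓝 x₀] fun x => deriv A x - deriv B x := by
      filter_upwards [hA.eventually_analyticAt, hB.eventually_analyticAt] with x hAx hBx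
      exact deriv_sub hAx.differentiableAt hBx.differentiableAt
    -- regrouped so that each summand visibly vanishes to order `n`
    have hderiv : deriv (fun x => G (A x) - G (B x)) =ᶠ[𝓝 x₀] fun x =>
        (deriv A x - deriv B x) • deriv G (A x) + deriv B x • (deriv G (A x) - deriv G (B x)) := by
      have hAt : Tendsto A (𝓝 x₀) (𝓝 c) := hAc ▸ hA.continuousAt
      have hBt : Tendsto B (𝓝 x₀) (𝓝 c) := hBc ▸ hB.continuousAt
      filter_upwards [hA.eventually_analyticAt, hB.eventually_analyticAt,
        hAt.eventually hG.eventually_analyticAt, hBt.eventually hG.eventually_analyticAt]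
        with x hAx hBx hGAx hGBx
      refine ((hGAx.differentiableAt.hasDerivAt.scomp x hAx.differentiableAt.hasDerivAt).sub
        (hGBx.differentiableAt.hasDerivAt.scomp x hBx.differentiableAt.hasDerivAt)).deriv.trans ?_
      module
    rw [analyticOrderAt_congr hderiv]
    refine le_trans (le_min ?_ ?_) le_analyticOrderAt_add
    · calc (n : ℕ∞) ≤ analyticOrderAt (fun x => deriv A x - deriv B x) x₀ := by
            rwa [← analyticOrderAt_congr hderiv_AB]
        _ ≤ _ := (analyticOrderAt_smul (hA.deriv.fun_sub hB.deriv) hG'A).symm ▸ le_self_add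
    · calc (n : ℕ∞) ≤ analyticOrderAt (fun x => deriv G (A x) - deriv G (B x)) x₀ :=
            ih hG.deriv hnAB
        _ ≤ _ := (analyticOrderAt_smul hB.deriv (hG'A.fun_sub hG'B)).symm ▸ le_add_self

theorem analyticOrderAt_id_sub_comp_le {p q : 𝕜 → 𝕜} {x₀ y₀ : 𝕜} (hp : AnalyticAt 𝕜 p x₀)
    (hq : AnalyticAt 𝕜 q y₀) (hpx : p x₀ = y₀) (hqy : q y₀ = x₀) (hp' : deriv p x₀ ≠ 0) :
    analyticOrderAt (fun x => x - q (p x)) x₀ ≤ analyticOrderAt (fun y => y - p (q y)) y₀ := by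
  subst hpx
  calc analyticOrderAt (fun x => x - q (p x)) x₀
      ≤ analyticOrderAt (fun x => p x - p (q (p x))) x₀ :=
        analyticOrderAt_sub_le_analyticOrderAt_comp_sub hp analyticAt_id (hq.comp hp) rfl hqy
    _ = analyticOrderAt ((fun y => y - p (q y)) ∘ p) x₀ := rfl
    _ = analyticOrderAt (fun y => y - p (q y)) (p x₀) :=
        analyticOrderAt_comp_of_deriv_ne_zero hp hp'

theorem analyticOrderAt_id_sub_comp_comm {p q : 𝕜 → 𝕜} {x₀ y₀ : 𝕜} (hp : AnalyticAt 𝕜 p x₀)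
    (hq : AnalyticAt 𝕜 q y₀) (hpx : p x₀ = y₀) (hqy : q y₀ = x₀) :
    analyticOrderAt (fun x => x - q (p x)) x₀ = analyticOrderAt (fun y => y - p (q y)) y₀ := by
  by_cases hd : deriv p x₀ ≠ 0 ∧ deriv q y₀ ≠ 0
  · exact le_antisymm (analyticOrderAt_id_sub_comp_le hp hq hpx hqy hd.1)
      (analyticOrderAt_id_sub_comp_le hq hp hqy hpx hd.2)
  · have h0 : deriv q y₀ * deriv p x₀ = 0 := by
      rw [mul_eq_zero]
      tauto
    rw [analyticOrderAt_id_sub_comp_eq_one hp hq hpx hqy (by rw [h0]; exact zero_ne_one),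
      analyticOrderAt_id_sub_comp_eq_one hq hp hqy hpx (by rw [mul_comm, h0]; exact zero_ne_one)]

end

open Filter in
theorem stmt12_general (p q : ℝ → ℝ) (x₀ y₀ : ℝ) (U V : Set ℝ)
    (hU : U ∈ nhds x₀) (hV : V ∈ nhds y₀)
    (hpa : AnalyticOnNhd ℝ p U) (hqa : AnalyticOnNhd ℝ q V)
    (hpx : p x₀ = y₀) (hqy : q y₀ = x₀)
    (hqp : ∀ W ∈ nhds x₀, ¬ Set.EqOn (fun x => q (p x)) id W) :
    ∃ k : ℕ, 1 ≤ k ∧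
      (∀ j < k, iteratedDeriv j (fun x => x - q (p x)) x₀ = 0) ∧
      iteratedDeriv k (fun x => x - q (p x)) x₀ ≠ 0 ∧
      (∀ j < k, iteratedDeriv j (fun y => y - p (q y)) y₀ = 0) ∧
      iteratedDeriv k (fun y => y - p (q y)) y₀ ≠ 0 := by
  have hp := hpa x₀ (mem_of_mem_nhds hU)
  have hq := hqa y₀ (mem_of_mem_nhds hV)
  have hφ : AnalyticAt ℝ (fun x => x - q (p x)) x₀ := analyticAt_id.fun_sub ((hpx ▸ hq).comp hp)
  have hψ : AnalyticAt ℝ (fun y => y - p (q y)) y₀ := analyticAt_id.fun_sub ((hqy ▸ hp).comp hq)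
  have hfin : analyticOrderAt (fun x => x - q (p x)) x₀ ≠ ⊤ := by
    rw [Ne, analyticOrderAt_eq_top]
    intro hzero
    obtain ⟨W, hW, hWzero⟩ := hzero.exists_mem
    exact hqp W hW fun x hx => (sub_eq_zero.mp (hWzero x hx)).symm
  obtain ⟨k, hk⟩ := ENat.ne_top_iff_exists.mp hfin
  have hk0 : k ≠ 0 := by
    rintro rfl
    exact hφ.analyticOrderAt_ne_zero.mpr (by simp [hpx, hqy]) hk.symm
  obtain ⟨hφ_zero, hφ_ne⟩ := (analyticOrderAt_eq_nat_iff_iteratedDeriv_eq_zero hφ).mp hk.symm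
  obtain ⟨hψ_zero, hψ_ne⟩ := (analyticOrderAt_eq_nat_iff_iteratedDeriv_eq_zero hψ).mp
    (hk ▸ analyticOrderAt_id_sub_comp_comm hp hq hpx hqy).symm
  exact ⟨k, Nat.one_le_iff_ne_zero.mpr hk0, hφ_zero, hφ_ne, hψ_zero, hψ_ne⟩

open Filter in
/-- If `p` and `q` are real analytic and strictly monotone near `x₀` and `y₀`
respectively, with `p x₀ = y₀`, `q y₀ = x₀`, and neither `q ∘ p` nor `p ∘ q`
is the identity on any neighborhood, then the orders of vanishing `d_x` of
`x ↦ x − q(p x)` at `x₀` and `d_y` of `y ↦ y − p(q y)` at `y₀` are equal and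
finite: there is a common `k ≥ 1` realizing both multiplicities. -/
theorem stmt12 (p q : ℝ → ℝ) (x₀ y₀ : ℝ) (U V : Set ℝ)
    (hU : U ∈ nhds x₀) (hV : V ∈ nhds y₀)
    (hpa : AnalyticOnNhd ℝ p U) (hqa : AnalyticOnNhd ℝ q V)
    (hpm : StrictMonoOn p U ∨ StrictAntiOn p U)
    (hqm : StrictMonoOn q V ∨ StrictAntiOn q V)
    (hpx : p x₀ = y₀) (hqy : q y₀ = x₀)
    (hqp : ∀ W ∈ nhds x₀, ¬ Set.EqOn (fun x => q (p x)) id W)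
    (hpq : ∀ W ∈ nhds y₀, ¬ Set.EqOn (fun y => p (q y)) id W) :
    ∃ k : ℕ, 1 ≤ k ∧
      (∀ j < k, iteratedDeriv j (fun x => x - q (p x)) x₀ = 0) ∧
      iteratedDeriv k (fun x => x - q (p x)) x₀ ≠ 0 ∧
      (∀ j < k, iteratedDeriv j (fun y => y - p (q y)) y₀ = 0) ∧
      iteratedDeriv k (fun y => y - p (q y)) y₀ ≠ 0 :=
  stmt12_general p q x₀ y₀ U V hU hV hpa hqa hpx hqy hqp
end

section
/- Let b₁, c₁, h₁, b₂, c₂, h₂ be positive reals and define T on [0,∞)×[0,∞) by T(x,y) = (b₁·x/(1+x+c₁·y) + h₁, b₂·y/(1+y+c₂·x) + h₂). Then the set E of fixed points of T in [0,∞)×[0,∞) is nonempty, has at most three elements, and is totally ordered by the south-east order: for any two fixed points p, q ∈ E, either p ≤se q or q ≤se p. -/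
/-!
At an equilibrium, `h₁ < x` and `h₂ < y`, and the first equation `(x - h₁)(1 + x + c₁ y) = b₁ x`
expresses `y` as a strictly decreasing function of `x`. So an equilibrium is determined by its
first coordinate, and any two equilibria are comparable in the south-east order. This nullcline
crosses the level `y = h₂` at some `x̄ > h₁`, and every equilibrium has `x < x̄`. Eliminating `y`
turns the second equation into a quartic `Q(x) = 0` with `Q(h₁) > 0 > Q(x̄)`. The intermediate
value theorem then gives an equilibrium, and `Q` cannot have four roots in `(h₁, x̄)`, since a
quartic with all its roots in `(h₁, x̄)` takes values of the same sign at `h₁` and `x̄`.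
-/

open Polynomial Set

theorem Polynomial.odd_card_of_eval_mul_eval_neg {P : ℝ[X]} {a b : ℝ} {s : Finset ℝ}
    (hab : P.eval a * P.eval b < 0) (hs : ∀ x ∈ s, x ∈ Ioo a b ∧ P.IsRoot x)
    (hdeg : P.natDegree ≤ s.card) : Odd s.card := by
  have hP : P ≠ 0 := by rintro rfl; simp at hab
  have hle : s.val ≤ P.roots :=
    (Multiset.le_iff_subset s.nodup).2 fun x hx => (mem_roots hP).2 (hs x hx).2
  have hroots : P.roots = s.val :=
    (Multiset.eq_of_le_of_card_le hle ((card_roots' P).trans hdeg)).symm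
  have hsplit : C P.leadingCoeff * ∏ r ∈ s, (X - C r) = P := by
    have := C_leadingCoeff_mul_prod_multiset_X_sub_C (le_antisymm (card_roots' P) (hroots ▸ hdeg))
    rwa [hroots] at this
  have heval (t : ℝ) : P.eval t = P.leadingCoeff * ∏ r ∈ s, (t - r) := by
    conv_lhs => rw [← hsplit]
    simp [eval_prod]
  have hpos : 0 < ∏ r ∈ s, (r - a) * (b - r) :=
    Finset.prod_pos fun r hr => mul_pos (sub_pos.2 (hs r hr).1.1) (sub_pos.2 (hs r hr).1.2)
  have hprod : P.eval a * P.eval b =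
      P.leadingCoeff ^ 2 * ((-1) ^ s.card * ∏ r ∈ s, (r - a) * (b - r)) := by
    rw [heval, heval, ← Finset.prod_neg, mul_mul_mul_comm, ← Finset.prod_mul_distrib, ← sq]
    congr 1
    exact Finset.prod_congr rfl fun r _ => by ring
  by_contra hodd
  rw [hprod, (Nat.not_odd_iff_even.1 hodd).neg_one_pow, one_mul] at hab
  exact hab.not_ge (mul_nonneg (sq_nonneg _) hpos.le)

theorem Polynomial.encard_le_three_of_natDegree_le_four {P : ℝ[X]} {a b : ℝ}
    (hdeg : P.natDegree ≤ 4) (hab : P.eval a * P.eval b < 0) {S : Set ℝ}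
    (hS : ∀ x ∈ S, x ∈ Ioo a b ∧ P.IsRoot x) : S.encard ≤ 3 := by
  have hP : P ≠ 0 := by rintro rfl; simp at hab
  have hfin : S.Finite := (finite_setOfPred_isRoot hP).subset fun x hx => (hS x hx).2
  have hs : ∀ x ∈ hfin.toFinset, x ∈ Ioo a b ∧ P.IsRoot x := fun x hx => hS x (by simpa using hx)
  have hcard : hfin.toFinset.card ≤ P.natDegree :=
    card_le_degree_of_subset_roots fun x hx => (mem_roots hP).2 (hs x hx).2
  rw [hfin.encard_eq_coe_toFinset_card]
  norm_cast
  by_contra! h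
  have hodd := odd_card_of_eval_mul_eval_neg hab hs (by omega)
  rw [show hfin.toFinset.card = 4 by omega] at hodd
  exact absurd hodd (by decide)

namespace LGIN

variable {b₁ c₁ h₁ b₂ c₂ h₂ : ℝ}

noncomputable def map (b₁ c₁ h₁ b₂ c₂ h₂ : ℝ) (p : ℝ × ℝ) : ℝ × ℝ :=
  (b₁ * p.1 / (1 + p.1 + c₁ * p.2) + h₁, b₂ * p.2 / (1 + p.2 + c₂ * p.1) + h₂)

structure IsEquilibrium (b₁ c₁ h₁ b₂ c₂ h₂ : ℝ) (p : ℝ × ℝ) : Prop where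
  lt_fst : h₁ < p.1
  lt_snd : h₂ < p.2
  eq_fst : (p.1 - h₁) * (1 + p.1 + c₁ * p.2) = b₁ * p.1
  eq_snd : (p.2 - h₂) * (1 + p.2 + c₂ * p.1) = b₂ * p.2

theorem nonneg_and_div_add_eq_iff {b h d x : ℝ} (hb : 0 < b) (hh : 0 < h) (hd : 0 ≤ d) :
    0 ≤ x ∧ b * x / (1 + x + d) + h = x ↔ h < x ∧ (x - h) * (1 + x + d) = b * x := by
  constructor
  · rintro ⟨hx, hfix⟩
    have hden : 0 < 1 + x + d := by positivity
    have hxh : h ≤ x := by have := div_nonneg (mul_nonneg hb.le hx) hden.le; linarith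
    have hquot : 0 < b * x / (1 + x + d) := div_pos (mul_pos hb (hh.trans_le hxh)) hden
    refine ⟨by linarith, ?_⟩
    rw [show x - h = b * x / (1 + x + d) by linarith]
    field_simp
  · rintro ⟨hxh, heq⟩
    have hden : 0 < 1 + x + d := by linarith
    refine ⟨by linarith, ?_⟩
    rw [div_add' _ _ _ hden.ne', div_eq_iff hden.ne']
    linarith

theorem fixed_iff_isEquilibrium (hb₁ : 0 < b₁) (hc₁ : 0 ≤ c₁) (hh₁ : 0 < h₁)
    (hb₂ : 0 < b₂) (hc₂ : 0 ≤ c₂) (hh₂ : 0 < h₂) {p : ℝ × ℝ} :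
    p ∈ Ici 0 ×ˢ Ici 0 ∧ map b₁ c₁ h₁ b₂ c₂ h₂ p = p ↔ IsEquilibrium b₁ c₁ h₁ b₂ c₂ h₂ p := by
  constructor
  · rintro ⟨⟨hx, hy⟩, hfix⟩
    rw [Prod.ext_iff] at hfix
    obtain ⟨hx₁, hx₂⟩ := (nonneg_and_div_add_eq_iff hb₁ hh₁ (mul_nonneg hc₁ hy)).1 ⟨hx, hfix.1⟩
    obtain ⟨hy₁, hy₂⟩ := (nonneg_and_div_add_eq_iff hb₂ hh₂ (mul_nonneg hc₂ hx)).1 ⟨hy, hfix.2⟩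
    exact ⟨hx₁, hy₁, hx₂, hy₂⟩
  · intro hp
    have hx := hh₁.trans hp.lt_fst
    have hy := hh₂.trans hp.lt_snd
    obtain ⟨hx₀, hx₁⟩ := (nonneg_and_div_add_eq_iff hb₁ hh₁ (mul_nonneg hc₁ hy.le)).2
      ⟨hp.lt_fst, hp.eq_fst⟩
    obtain ⟨hy₀, hy₁⟩ := (nonneg_and_div_add_eq_iff hb₂ hh₂ (mul_nonneg hc₂ hx.le)).2
      ⟨hp.lt_snd, hp.eq_snd⟩
    exact ⟨⟨hx₀, hy₀⟩, Prod.ext hx₁ hy₁⟩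

/-- The first fixed-point equation `(x - h₁) (1 + x + c₁ y) = b₁ x`, solved for `y`. -/
noncomputable def fstNullcline (b₁ c₁ h₁ x : ℝ) : ℝ :=
  (b₁ * h₁ / (x - h₁) + b₁ - 1 - x) / c₁

theorem fstNullcline_eq_iff (hc₁ : c₁ ≠ 0) {x y : ℝ} (hx : h₁ < x) :
    fstNullcline b₁ c₁ h₁ x = y ↔ (x - h₁) * (1 + x + c₁ * y) = b₁ * x := by
  have hx' : x - h₁ ≠ 0 := (sub_pos.2 hx).ne'
  rw [fstNullcline]
  field_simp
  constructor <;> intro h <;> linear_combination -h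

theorem strictAntiOn_fstNullcline (hb₁ : 0 ≤ b₁) (hc₁ : 0 < c₁) (hh₁ : 0 ≤ h₁) :
    StrictAntiOn (fstNullcline b₁ c₁ h₁) (Ioi h₁) := by
  intro x hx x' hx' hlt
  have : b₁ * h₁ / (x' - h₁) ≤ b₁ * h₁ / (x - h₁) :=
    div_le_div_of_nonneg_left (by positivity) (sub_pos.2 hx) (by linarith)
  unfold fstNullcline
  gcongr ?_ / _
  linarith

theorem exists_fstNullcline_eq (hb₁ : 0 < b₁) (hc₁ : 0 < c₁) (hh₁ : 0 < h₁) {y : ℝ}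
    (hy : 0 ≤ y) : ∃ x, h₁ < x ∧ fstNullcline b₁ c₁ h₁ x = y := by
  obtain ⟨x, ⟨hx, -⟩, hxy⟩ : (0 : ℝ) ∈ (fun x => (x - h₁) * (1 + x + c₁ * y) - b₁ * x) ''
      Ioo h₁ (h₁ + b₁ + 1) := by
    refine intermediate_value_Ioo (by linarith) (by fun_prop) ⟨by nlinarith, ?_⟩
    have := mul_nonneg hc₁.le hy
    nlinarith
  exact ⟨x, hx, (fstNullcline_eq_iff hc₁.ne' hx).2 (sub_eq_zero.1 hxy)⟩

namespace IsEquilibrium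

variable {p q : ℝ × ℝ}

theorem fstNullcline_fst (hp : IsEquilibrium b₁ c₁ h₁ b₂ c₂ h₂ p) (hc₁ : c₁ ≠ 0) :
    fstNullcline b₁ c₁ h₁ p.1 = p.2 :=
  (fstNullcline_eq_iff hc₁ hp.lt_fst).2 hp.eq_fst

theorem se_comparable (hb₁ : 0 ≤ b₁) (hc₁ : 0 < c₁) (hh₁ : 0 ≤ h₁)
    (hp : IsEquilibrium b₁ c₁ h₁ b₂ c₂ h₂ p) (hq : IsEquilibrium b₁ c₁ h₁ b₂ c₂ h₂ q) :
    (p.1 ≤ q.1 ∧ q.2 ≤ p.2) ∨ (q.1 ≤ p.1 ∧ p.2 ≤ q.2) := by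
  have hanti := (strictAntiOn_fstNullcline hb₁ hc₁ hh₁).antitoneOn
  rw [← hp.fstNullcline_fst hc₁.ne', ← hq.fstNullcline_fst hc₁.ne']
  rcases le_total p.1 q.1 with h | h
  · exact Or.inl ⟨h, hanti hp.lt_fst hq.lt_fst h⟩
  · exact Or.inr ⟨h, hanti hq.lt_fst hp.lt_fst h⟩

theorem fst_lt (hb₁ : 0 ≤ b₁) (hc₁ : 0 < c₁) (hh₁ : 0 ≤ h₁)
    (hp : IsEquilibrium b₁ c₁ h₁ b₂ c₂ h₂ p) {x : ℝ} (hx : h₁ < x)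
    (hxh₂ : fstNullcline b₁ c₁ h₁ x = h₂) : p.1 < x := by
  by_contra! h
  have := (strictAntiOn_fstNullcline hb₁ hc₁ hh₁).antitoneOn hx hp.lt_fst h
  rw [hp.fstNullcline_fst hc₁.ne', hxh₂] at this
  exact this.not_gt hp.lt_snd

end IsEquilibrium

theorem injOn_fst_setOf_isEquilibrium (hc₁ : c₁ ≠ 0) :
    InjOn Prod.fst {p | IsEquilibrium b₁ c₁ h₁ b₂ c₂ h₂ p} := fun p hp q hq h =>
  Prod.ext h (by rw [← hp.fstNullcline_fst hc₁, ← hq.fstNullcline_fst hc₁, h])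

/-- With `N = b₁ X - (X - h₁)(1 + X)` and `D = c₁ (X - h₁)`, the first fixed-point equation reads
`D y = N`; substituting `y = N / D` into the second one and multiplying by `D²` gives this
polynomial. -/
noncomputable def quartic (b₁ c₁ h₁ b₂ c₂ h₂ : ℝ) : ℝ[X] :=
  (C b₁ * X - (X - C h₁) * (1 + X)) ^ 2 +
    (C b₁ * X - (X - C h₁) * (1 + X)) * (C c₁ * (X - C h₁)) * (1 + C c₂ * X - C h₂ - C b₂) -
    C h₂ * (C c₁ * (X - C h₁)) ^ 2 * (1 + C c₂ * X)

theorem natDegree_quartic_le : (quartic b₁ c₁ h₁ b₂ c₂ h₂).natDegree ≤ 4 := by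
  unfold quartic
  compute_degree

theorem eval_quartic_of_eq_fst {x y : ℝ} (h : (x - h₁) * (1 + x + c₁ * y) = b₁ * x) :
    (quartic b₁ c₁ h₁ b₂ c₂ h₂).eval x =
      (c₁ * (x - h₁)) ^ 2 * ((y - h₂) * (1 + y + c₂ * x) - b₂ * y) := by
  simp only [quartic, eval_add, eval_sub, eval_mul, eval_pow, eval_C, eval_X, eval_one]
  linear_combination (-(b₁ * x - (x - h₁) * (1 + x) + c₁ * y * (x - h₁) +
    c₁ * (x - h₁) * (1 + c₂ * x - h₂ - b₂))) * h

theorem eval_quartic_self : (quartic b₁ c₁ h₁ b₂ c₂ h₂).eval h₁ = (b₁ * h₁) ^ 2 := by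
  simp only [quartic, eval_add, eval_sub, eval_mul, eval_pow, eval_C, eval_X, eval_one]
  ring

theorem eval_quartic_self_pos (hb₁ : b₁ ≠ 0) (hh₁ : h₁ ≠ 0) :
    0 < (quartic b₁ c₁ h₁ b₂ c₂ h₂).eval h₁ := by
  rw [eval_quartic_self]
  positivity

theorem eval_quartic_neg (hc₁ : c₁ ≠ 0) (hb₂ : 0 < b₂) (hh₂ : 0 < h₂) {x : ℝ} (hx : h₁ < x)
    (hxh₂ : (x - h₁) * (1 + x + c₁ * h₂) = b₁ * x) :
    (quartic b₁ c₁ h₁ b₂ c₂ h₂).eval x < 0 := by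
  rw [eval_quartic_of_eq_fst hxh₂, sub_self, zero_mul, zero_sub, mul_neg, neg_lt_zero]
  have := sub_pos.2 hx
  positivity

theorem IsEquilibrium.eval_quartic_fst {p : ℝ × ℝ} (hp : IsEquilibrium b₁ c₁ h₁ b₂ c₂ h₂ p) :
    (quartic b₁ c₁ h₁ b₂ c₂ h₂).eval p.1 = 0 := by
  rw [eval_quartic_of_eq_fst hp.eq_fst, hp.eq_snd, sub_self, mul_zero]

theorem exists_isEquilibrium (hb₁ : 0 < b₁) (hc₁ : 0 < c₁) (hh₁ : 0 < h₁)
    (hb₂ : 0 < b₂) (hh₂ : 0 < h₂) : ∃ p, IsEquilibrium b₁ c₁ h₁ b₂ c₂ h₂ p := by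
  obtain ⟨xb, hxb, hxbh₂⟩ := exists_fstNullcline_eq hb₁ hc₁ hh₁ hh₂.le
  obtain ⟨x, ⟨hx, hxxb⟩, hroot⟩ : (0 : ℝ) ∈ (quartic b₁ c₁ h₁ b₂ c₂ h₂).eval '' Ioo h₁ xb :=
    intermediate_value_Ioo' hxb.le (Polynomial.continuous _).continuousOn
      ⟨eval_quartic_neg hc₁.ne' hb₂ hh₂ hxb ((fstNullcline_eq_iff hc₁.ne' hxb).1 hxbh₂),
        eval_quartic_self_pos hb₁.ne' hh₁.ne'⟩
  have heq_fst := (fstNullcline_eq_iff (y := fstNullcline b₁ c₁ h₁ x) hc₁.ne' hx).1 rfl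
  refine ⟨(x, fstNullcline b₁ c₁ h₁ x), hx, ?_, heq_fst, ?_⟩
  · rw [← hxbh₂]
    exact strictAntiOn_fstNullcline hb₁.le hc₁ hh₁.le hx hxb hxxb
  · beta_reduce at hroot
    rw [eval_quartic_of_eq_fst heq_fst] at hroot
    have hD : (c₁ * (x - h₁)) ^ 2 ≠ 0 := pow_ne_zero 2 (mul_pos hc₁ (sub_pos.2 hx)).ne'
    exact sub_eq_zero.1 ((mul_eq_zero.1 hroot).resolve_left hD)

theorem encard_setOf_isEquilibrium_le_three (hb₁ : 0 < b₁) (hc₁ : 0 < c₁) (hh₁ : 0 < h₁)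
    (hb₂ : 0 < b₂) (hh₂ : 0 < h₂) : {p | IsEquilibrium b₁ c₁ h₁ b₂ c₂ h₂ p}.encard ≤ 3 := by
  obtain ⟨xb, hxb, hxbh₂⟩ := exists_fstNullcline_eq hb₁ hc₁ hh₁ hh₂.le
  rw [← (injOn_fst_setOf_isEquilibrium hc₁.ne').encard_image]
  refine encard_le_three_of_natDegree_le_four (natDegree_quartic_le (c₂ := c₂))
    (mul_neg_of_pos_of_neg (eval_quartic_self_pos hb₁.ne' hh₁.ne')
      (eval_quartic_neg hc₁.ne' hb₂ hh₂ hxb ((fstNullcline_eq_iff hc₁.ne' hxb).1 hxbh₂))) ?_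
  rintro _ ⟨p, hp, rfl⟩
  exact ⟨⟨hp.lt_fst, hp.fst_lt hb₁.le hc₁ hh₁.le hxb hxbh₂⟩, hp.eval_quartic_fst⟩

end LGIN

open Set in
/-- The set of fixed points of `T(x,y) = (b₁x/(1+x+c₁y)+h₁, b₂y/(1+y+c₂x)+h₂)`
in `[0,∞)×[0,∞)` is nonempty, has at most three elements, and is totally
ordered by the south-east order `(x₁,y₁) ≤se (x₂,y₂) ↔ x₁ ≤ x₂ ∧ y₂ ≤ y₁`. -/
theorem stmt13 (b₁ c₁ h₁ b₂ c₂ h₂ : ℝ)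
    (hb₁ : 0 < b₁) (hc₁ : 0 < c₁) (hh₁ : 0 < h₁)
    (hb₂ : 0 < b₂) (hc₂ : 0 < c₂) (hh₂ : 0 < h₂)
    (T : ℝ × ℝ → ℝ × ℝ)
    (hT : ∀ x y, T (x, y) =
      (b₁ * x / (1 + x + c₁ * y) + h₁, b₂ * y / (1 + y + c₂ * x) + h₂))
    (E : Set (ℝ × ℝ))
    (hE : E = {p : ℝ × ℝ | p ∈ Ici (0:ℝ) ×ˢ Ici (0:ℝ) ∧ T p = p}) :
    E.Nonempty ∧ E.encard ≤ 3 ∧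
      ∀ p ∈ E, ∀ q ∈ E,
        (p.1 ≤ q.1 ∧ q.2 ≤ p.2) ∨ (q.1 ≤ p.1 ∧ p.2 ≤ q.2) := by
  have hTmap : T = LGIN.map b₁ c₁ h₁ b₂ c₂ h₂ := funext fun p => hT p.1 p.2
  have hEeq : E = {p | LGIN.IsEquilibrium b₁ c₁ h₁ b₂ c₂ h₂ p} := by
    ext p
    rw [hE, hTmap]
    exact LGIN.fixed_iff_isEquilibrium hb₁ hc₁.le hh₁ hb₂ hc₂.le hh₂
  subst hEeq
  exact ⟨LGIN.exists_isEquilibrium hb₁ hc₁ hh₁ hb₂ hh₂,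
    LGIN.encard_setOf_isEquilibrium_le_three hb₁ hc₁ hh₁ hb₂ hh₂,
    fun p hp q hq => hp.se_comparable hb₁.le hc₁ hh₁.le hq⟩
end

section
/- Let b₁, c₁, h₁, b₂, c₂, h₂ be positive reals and define T on [0,∞)×[0,∞) by T(x,y) = (b₁·x/(1+x+c₁·y) + h₁, b₂·y/(1+y+c₂·x) + h₂). Suppose T has exactly one fixed point (x̄,ȳ) in [0,∞)×[0,∞). Then (x̄,ȳ) is globally asymptotically stable: (1) for every (x,y) ∈ [0,∞)×[0,∞), Tⁿ(x,y) → (x̄,ȳ) as n → ∞; and (2) for every ε > 0 there exists δ > 0 such that every (x,y) ∈ [0,∞)×[0,∞) with ‖(x,y) − (x̄,ȳ)‖ < δ satisfies ‖Tⁿ(x,y) − (x̄,ȳ)‖ < ε for all n ≥ 0. -/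
/-!
Reversing the order of the second coordinate (the southeast order) makes `T` monotone, and `T`
maps the quadrant into the box `[h₁, b₁ + h₁] × [h₂, b₂ + h₂]`. The orbits of the two extreme
corners of the box are therefore monotone and bounded, so they converge; their limits are fixed
points, hence both equal the unique one `(x̄, ȳ)`. After one step every orbit is squeezed between
the two corner orbits, which gives attraction uniformly on the quadrant. Uniform attraction
together with the continuity of the finitely many remaining iterates at the fixed point gives
Lyapunov stability.
-/

open Set Filter Topology Metric Function OrderDual

section Order

variable {α : Type*} [Preorder α] {f : α → α} {s t : Set α} {a b : α}

theorem MonotoneOn.iterate (hf : MonotoneOn f t) (ht : MapsTo f t t) (n : ℕ) :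
    MonotoneOn f^[n] t := by
  induction n with
  | zero => exact monotoneOn_id
  | succ n ih => rw [iterate_succ]; exact ih.comp hf ht

theorem MonotoneOn.iterate_succ_mem_Icc (hf : MonotoneOn f s) (hmaps : MapsTo f s (Icc a b))
    (hs : Icc a b ⊆ s) (hab : a ≤ b) {p : α} (hp : p ∈ s) (n : ℕ) :
    f^[n + 1] p ∈ Icc (f^[n] a) (f^[n] b) := by
  have hfn := (hf.mono hs).iterate (hmaps.mono_left hs) n
  have hfp := hmaps hp
  rw [iterate_succ_apply]
  exact ⟨hfn (left_mem_Icc.2 hab) hfp hfp.1, hfn hfp (right_mem_Icc.2 hab) hfp.2⟩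

end Order

section Convergence

variable {α : Type*} [PartialOrder α] [TopologicalSpace α] [OrderClosedTopology α]
  [CompactIccSpace α] [FirstCountableTopology α] {f : α → α} {s : Set α} {a b x : α}

theorem Monotone.exists_tendsto_of_mem_Icc [SupConvergenceClass α] {u : ℕ → α} (hu : Monotone u)
    (hmem : ∀ n, u n ∈ Icc a b) : ∃ c ∈ Icc a b, Tendsto u atTop (𝓝 c) := by
  obtain ⟨c, hc, φ, hφ, hlim⟩ := isCompact_Icc.tendsto_subseq hmem
  have hlub : IsLUB (range (u ∘ φ)) c := isLUB_of_tendsto_atTop (hu.comp hφ.monotone) hlim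
  refine ⟨c, hc, tendsto_atTop_isLUB hu ⟨?_, fun B hB => hlub.2 ?_⟩⟩
  · rintro _ ⟨n, rfl⟩
    exact (hu (hφ.id_le n)).trans (hlub.1 (mem_range_self n))
  · rintro _ ⟨n, rfl⟩
    exact hB (mem_range_self (φ n))

theorem MonotoneOn.tendsto_iterate_left [SupConvergenceClass α] (hf : MonotoneOn f s)
    (hmaps : MapsTo f s (Icc a b)) (hs : Icc a b ⊆ s) (hab : a ≤ b)
    (hcont : ∀ p ∈ s, ContinuousAt f p) (huniq : ∀ p ∈ s, IsFixedPt f p → p = x) :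
    Tendsto (fun n => f^[n] a) atTop (𝓝 x) := by
  have hI : MapsTo f (Icc a b) (Icc a b) := hmaps.mono_left hs
  have horbit : ∀ n, f^[n] a ∈ Icc a b := fun n => hI.iterate n (left_mem_Icc.2 hab)
  have hmono : Monotone fun n => f^[n] a := monotone_nat_of_le_succ fun n => by
    rw [iterate_succ_apply]
    exact (hf.mono hs).iterate hI n (left_mem_Icc.2 hab) (horbit 1) (horbit 1).1
  obtain ⟨c, hc, hlim⟩ := hmono.exists_tendsto_of_mem_Icc horbit
  rwa [huniq c (hs hc) (isFixedPt_of_tendsto_iterate hlim (hcont c (hs hc)))] at hlim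

theorem MonotoneOn.tendsto_iterate_right [InfConvergenceClass α] (hf : MonotoneOn f s)
    (hmaps : MapsTo f s (Icc a b)) (hs : Icc a b ⊆ s) (hab : a ≤ b)
    (hcont : ∀ p ∈ s, ContinuousAt f p) (huniq : ∀ p ∈ s, IsFixedPt f p → p = x) :
    Tendsto (fun n => f^[n] b) atTop (𝓝 x) :=
  MonotoneOn.tendsto_iterate_left (α := αᵒᵈ) (f := toDual ∘ f ∘ ofDual) (s := ofDual ⁻¹' s)
    (a := toDual b) (b := toDual a) (x := toDual x) hf.dual (by rwa [Icc_toDual])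
    (by rwa [Icc_toDual]) hab hcont huniq

end Convergence

section Stability

variable {α : Type*} [PartialOrder α] [PseudoMetricSpace α] [OrderClosedTopology α]
  [CompactIccSpace α] [SupConvergenceClass α] [InfConvergenceClass α]
  {f : α → α} {s : Set α} {a b x : α}

def IsGloballyAsymptoticallyStable (f : α → α) (s : Set α) (x : α) : Prop :=
  (∀ p ∈ s, Tendsto (fun n => f^[n] p) atTop (𝓝 x)) ∧
    ∀ ε > 0, ∃ δ > 0, ∀ p ∈ s, dist p x < δ → ∀ n, dist (f^[n] p) x < ε

theorem MonotoneOn.tendstoUniformlyOn_iterate (hf : MonotoneOn f s)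
    (hmaps : MapsTo f s (Icc a b)) (hs : Icc a b ⊆ s) (hab : a ≤ b)
    (hcont : ∀ p ∈ s, ContinuousAt f p) (huniq : ∀ p ∈ s, IsFixedPt f p → p = x)
    (hball : ∀ r, (ball x r).OrdConnected) :
    TendstoUniformlyOn (fun n => f^[n]) (fun _ => x) atTop s := by
  rw [Metric.tendstoUniformlyOn_iff]
  intro ε hε
  have hends : ∀ᶠ n in atTop, f^[n] a ∈ ball x ε ∧ f^[n] b ∈ ball x ε :=
    ((hf.tendsto_iterate_left hmaps hs hab hcont huniq).eventually (ball_mem_nhds x hε)).and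
      ((hf.tendsto_iterate_right hmaps hs hab hcont huniq).eventually (ball_mem_nhds x hε))
  filter_upwards [(tendsto_sub_atTop_nat 1).eventually hends, eventually_ge_atTop 1]
    with n ⟨ha, hb⟩ hn p hp
  have hsandwich := hf.iterate_succ_mem_Icc hmaps hs hab hp (n - 1)
  rw [Nat.sub_add_cancel hn] at hsandwich
  exact mem_ball'.1 ((hball ε).out ha hb hsandwich)

theorem MonotoneOn.isGloballyAsymptoticallyStable (hf : MonotoneOn f s)
    (hmaps : MapsTo f s (Icc a b)) (hs : Icc a b ⊆ s) (hab : a ≤ b)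
    (hcont : ∀ p ∈ s, ContinuousAt f p) (huniq : ∀ p ∈ s, IsFixedPt f p → p = x)
    (hball : ∀ r, (ball x r).OrdConnected) : IsGloballyAsymptoticallyStable f s x := by
  have hunif := hf.tendstoUniformlyOn_iterate hmaps hs hab hcont huniq hball
  refine ⟨fun p hp => hunif.tendsto_at hp, fun ε hε => ?_⟩
  have hlow := hf.tendsto_iterate_left hmaps hs hab hcont huniq
  have hx : x ∈ Icc a b := isClosed_Icc.mem_of_tendsto hlow
    (Eventually.of_forall fun n => (hmaps.mono_left hs).iterate n (left_mem_Icc.2 hab))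
  have hfix : IsFixedPt f x := isFixedPt_of_tendsto_iterate hlow (hcont x (hs hx))
  obtain ⟨N, hN⟩ := eventually_atTop.1 (Metric.tendstoUniformlyOn_iff.1 hunif ε hε)
  have hnear : ∀ᶠ p in 𝓝 x, ∀ n ∈ Finset.range N, dist (f^[n] p) x < ε :=
    (Finset.range N).eventually_all.2 fun n _ => by
      have := ((hcont x (hs hx)).iterate hfix n).tendsto
      rw [(hfix.iterate n).eq] at this
      exact this.eventually (ball_mem_nhds x hε)
  obtain ⟨δ, hδ, hδε⟩ := Metric.eventually_nhds_iff.1 hnear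
  refine ⟨δ, hδ, fun p hp hpx n => ?_⟩
  rcases lt_or_ge n N with hn | hn
  · exact hδε hpx n (Finset.mem_range.2 hn)
  · exact dist_comm x _ ▸ hN n hn p hp

end Stability

theorem Real.ordConnected_ball (x r : ℝ) : (ball x r).OrdConnected := by
  rw [Real.ball_eq_Ioo]; exact ordConnected_Ioo

theorem ordConnected_ball_prod_dual (x : ℝ × ℝᵒᵈ) (r : ℝ) : (ball x r).OrdConnected := by
  rw [← ball_prod_same, Set.prod_eq]
  exact ((Real.ordConnected_ball x.1 r).preimage_mono monotone_fst).inter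
    ((Real.ordConnected_ball (ofDual x.2) r).dual.preimage_mono monotone_snd)

noncomputable def lgGrowth (b c x y : ℝ) : ℝ := b * x / (1 + x + c * y)

section lgGrowth

variable {b c x y : ℝ}

theorem lgGrowth_nonneg (hb : 0 ≤ b) (hc : 0 ≤ c) (hx : 0 ≤ x) (hy : 0 ≤ y) :
    0 ≤ lgGrowth b c x y := by
  unfold lgGrowth; positivity

theorem lgGrowth_le (hb : 0 ≤ b) (hc : 0 ≤ c) (hx : 0 ≤ x) (hy : 0 ≤ y) :
    lgGrowth b c x y ≤ b := by
  unfold lgGrowth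
  rw [div_le_iff₀ (by positivity)]
  nlinarith [mul_nonneg hb (mul_nonneg hc hy)]

theorem lgGrowth_le_lgGrowth {x' y' : ℝ} (hb : 0 ≤ b) (hc : 0 ≤ c) (hx : 0 ≤ x) (hy' : 0 ≤ y')
    (hxx : x ≤ x') (hyy : y' ≤ y) : lgGrowth b c x y ≤ lgGrowth b c x' y' := by
  have hx' : 0 ≤ x' := hx.trans hxx
  unfold lgGrowth
  calc b * x / (1 + x + c * y) ≤ b * x / (1 + x + c * y') := by gcongr
    _ ≤ b * x' / (1 + x' + c * y') := by
        rw [div_le_div_iff₀ (by positivity) (by positivity)]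
        nlinarith [mul_nonneg (mul_nonneg hb (sub_nonneg.2 hxx)) (by positivity : 0 ≤ 1 + c * y')]

end lgGrowth

/-- The Leslie–Gower map on `ℝ × ℝᵒᵈ`: with the order of the second factor reversed, the
competitive map becomes monotone. -/
noncomputable def lgMap (b₁ c₁ h₁ b₂ c₂ h₂ : ℝ) (p : ℝ × ℝᵒᵈ) : ℝ × ℝᵒᵈ :=
  (lgGrowth b₁ c₁ p.1 (ofDual p.2) + h₁, toDual (lgGrowth b₂ c₂ (ofDual p.2) p.1 + h₂))

section lgMap

variable {b₁ c₁ h₁ b₂ c₂ h₂ : ℝ}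

theorem lgMap_mapsTo (hb₁ : 0 ≤ b₁) (hc₁ : 0 ≤ c₁) (hb₂ : 0 ≤ b₂) (hc₂ : 0 ≤ c₂) :
    MapsTo (lgMap b₁ c₁ h₁ b₂ c₂ h₂) (Ici 0 ×ˢ Iic (toDual 0))
      (Icc (h₁, toDual (b₂ + h₂)) (b₁ + h₁, toDual h₂)) := by
  rintro ⟨x, y⟩ ⟨hx, hy : 0 ≤ ofDual y⟩
  simp only [lgMap, mem_Icc, Prod.mk_le_mk, toDual_le_toDual]
  have := lgGrowth_nonneg hb₁ hc₁ hx hy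
  have := lgGrowth_le hb₁ hc₁ hx hy
  have := lgGrowth_nonneg hb₂ hc₂ hy hx
  have := lgGrowth_le hb₂ hc₂ hy hx
  refine ⟨⟨?_, ?_⟩, ?_, ?_⟩ <;> linarith

theorem lgMap_monotoneOn (hb₁ : 0 ≤ b₁) (hc₁ : 0 ≤ c₁) (hb₂ : 0 ≤ b₂) (hc₂ : 0 ≤ c₂) :
    MonotoneOn (lgMap b₁ c₁ h₁ b₂ c₂ h₂) (Ici 0 ×ˢ Iic (toDual 0)) := by
  rintro ⟨x, y⟩ ⟨hx, -⟩ ⟨x', y'⟩ ⟨-, hy' : 0 ≤ ofDual y'⟩ ⟨hxx, hyy : ofDual y' ≤ ofDual y⟩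
  simp only [lgMap, Prod.mk_le_mk, toDual_le_toDual, add_le_add_iff_right]
  exact ⟨lgGrowth_le_lgGrowth hb₁ hc₁ hx hy' hxx hyy, lgGrowth_le_lgGrowth hb₂ hc₂ hy' hx hyy hxx⟩

theorem continuousAt_lgMap (hc₁ : 0 ≤ c₁) (hc₂ : 0 ≤ c₂) :
    ∀ p ∈ Ici 0 ×ˢ Iic (toDual 0), ContinuousAt (lgMap b₁ c₁ h₁ b₂ c₂ h₂) p := by
  rintro p ⟨hx : 0 ≤ p.1, hy : 0 ≤ ofDual p.2⟩
  have hy' : Continuous fun q : ℝ × ℝᵒᵈ => ofDual q.2 := continuous_ofDual.comp continuous_snd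
  unfold lgMap lgGrowth
  refine .prodMk ?_ (continuous_toDual.continuousAt.comp ?_)
  · exact ((continuousAt_const.mul continuousAt_fst).div (by fun_prop) (by positivity)).add
      continuousAt_const
  · exact ((continuousAt_const.mul hy'.continuousAt).div (by fun_prop) (by positivity)).add
      continuousAt_const

end lgMap

open Set Filter in
theorem stmt14_general (b₁ c₁ h₁ b₂ c₂ h₂ : ℝ)
    (hb₁ : 0 < b₁) (hc₁ : 0 < c₁) (hh₁ : 0 < h₁)
    (hb₂ : 0 < b₂) (hc₂ : 0 < c₂) (hh₂ : 0 < h₂)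
    (T : ℝ × ℝ → ℝ × ℝ)
    (hT : ∀ x y, T (x, y) =
      (b₁ * x / (1 + x + c₁ * y) + h₁, b₂ * y / (1 + y + c₂ * x) + h₂))
    (xs ys : ℝ)
    (huniq : ∀ p ∈ Ici (0:ℝ) ×ˢ Ici (0:ℝ), T p = p → p = (xs, ys)) :
    (∀ p ∈ Ici (0:ℝ) ×ˢ Ici (0:ℝ),
      Tendsto (fun n => T^[n] p) atTop (nhds (xs, ys))) ∧
    (∀ ε > 0, ∃ δ > 0, ∀ p ∈ Ici (0:ℝ) ×ˢ Ici (0:ℝ),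
      ‖p - (xs, ys)‖ < δ → ∀ n : ℕ, ‖T^[n] p - (xs, ys)‖ < ε) := by
  -- `ℝ × ℝᵒᵈ` is definitionally `ℝ × ℝ`, with the same topology and distance
  obtain rfl : T = lgMap b₁ c₁ h₁ b₂ c₂ h₂ := funext fun p => hT p.1 p.2
  have hab : ((h₁, toDual (b₂ + h₂)) : ℝ × ℝᵒᵈ) ≤ (b₁ + h₁, toDual h₂) :=
    Prod.mk_le_mk.2 ⟨by linarith, toDual_le_toDual.2 (by linarith)⟩
  have hs : Icc ((h₁, toDual (b₂ + h₂)) : ℝ × ℝᵒᵈ) (b₁ + h₁, toDual h₂) ⊆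
      Ici 0 ×ˢ Iic (toDual 0) :=
    fun p hp => ⟨hh₁.le.trans hp.1.1, hh₂.le.trans hp.2.2⟩
  obtain ⟨hattract, hstable⟩ :=
    (lgMap_monotoneOn hb₁.le hc₁.le hb₂.le hc₂.le).isGloballyAsymptoticallyStable
      (lgMap_mapsTo hb₁.le hc₁.le hb₂.le hc₂.le) hs hab (continuousAt_lgMap hc₁.le hc₂.le)
      huniq (ordConnected_ball_prod_dual _)
  refine ⟨hattract, fun ε hε => ?_⟩
  obtain ⟨δ, hδ, hδε⟩ := hstable ε hε
  refine ⟨δ, hδ, fun p hp hpx n => ?_⟩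
  rw [← dist_eq_norm] at hpx ⊢
  exact hδε p hp hpx n

open Set Filter in
/-- If the map `T(x,y) = (b₁x/(1+x+c₁y)+h₁, b₂y/(1+y+c₂x)+h₂)` has exactly one
fixed point `(xs,ys)` in `[0,∞)×[0,∞)`, then it is globally asymptotically
stable: all orbits starting in `[0,∞)×[0,∞)` converge to it, and it is
Lyapunov stable. -/
theorem stmt14 (b₁ c₁ h₁ b₂ c₂ h₂ : ℝ)
    (hb₁ : 0 < b₁) (hc₁ : 0 < c₁) (hh₁ : 0 < h₁)
    (hb₂ : 0 < b₂) (hc₂ : 0 < c₂) (hh₂ : 0 < h₂)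
    (T : ℝ × ℝ → ℝ × ℝ)
    (hT : ∀ x y, T (x, y) =
      (b₁ * x / (1 + x + c₁ * y) + h₁, b₂ * y / (1 + y + c₂ * x) + h₂))
    (xs ys : ℝ) (hxs : 0 ≤ xs) (hys : 0 ≤ ys)
    (hfix : T (xs, ys) = (xs, ys))
    (huniq : ∀ p ∈ Ici (0:ℝ) ×ˢ Ici (0:ℝ), T p = p → p = (xs, ys)) :
    (∀ p ∈ Ici (0:ℝ) ×ˢ Ici (0:ℝ),
      Tendsto (fun n => T^[n] p) atTop (nhds (xs, ys))) ∧
    (∀ ε > 0, ∃ δ > 0, ∀ p ∈ Ici (0:ℝ) ×ˢ Ici (0:ℝ),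
      ‖p - (xs, ys)‖ < δ → ∀ n : ℕ, ‖T^[n] p - (xs, ys)‖ < ε) :=
  stmt14_general b₁ c₁ h₁ b₂ c₂ h₂ hb₁ hc₁ hh₁ hb₂ hc₂ hh₂ T hT xs ys huniq
end

section
/- Let a ≤ b and c ≤ d be real numbers, and let f : [a,b]×[c,d] → [a,b] and g : [a,b]×[c,d] → [c,d] be continuous functions such that (i) f(x,y) is non-decreasing in x and non-increasing in y, and g(x,y) is non-decreasing in y and non-increasing in x, and (ii) whenever m, M ∈ [a,b] and m̄, M̄ ∈ [c,d] satisfy m = f(m, M̄), M = f(M, m̄), m̄ = g(M, m̄), and M̄ = g(m, M̄), it follows that m = M and m̄ = M̄. Then the map T(x,y) = (f(x,y), g(x,y)) has a unique fixed point (x̄,ȳ) in [a,b]×[c,d], and for every (x₀,y₀) ∈ [a,b]×[c,d] the iterates Tⁿ(x₀,y₀) converge to (x̄,ȳ) as n → ∞. -/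
/-!
Reversing the order of the second coordinate turns the competitive map `T` into a monotone map
of the order interval `[(a, d), (b, c)]` of `ℝ × ℝᵒᵈ`. The orbits of the two corners are then
monotone, hence converge, and their limits are fixed points by continuity; every other orbit is
squeezed between them. Condition (ii) says exactly that `T` has at most one fixed point in the
rectangle, so the two limits coincide.
-/

open Set Filter Function OrderDual Topology

section Iterate

variable {α : Type*} [Preorder α] {s : Set α} {T : α → α}

theorem MonotoneOn.iterate_le_iterate (hT : MonotoneOn T s) (hs : MapsTo T s s) {p q : α}
    (hp : p ∈ s) (hq : q ∈ s) (hpq : p ≤ q) (n : ℕ) : T^[n] p ≤ T^[n] q := by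
  induction n generalizing p q with
  | zero => exact hpq
  | succ n ih => exact ih (hs hp) (hs hq) (hT hp hq hpq)

theorem MonotoneOn.monotone_iterate_of_le_map (hT : MonotoneOn T s) (hs : MapsTo T s s) {p : α}
    (hp : p ∈ s) (hpT : p ≤ T p) : Monotone fun n => T^[n] p :=
  monotone_nat_of_le_succ fun n => by
    rw [iterate_succ_apply]
    exact hT.iterate_le_iterate hs hp (hs hp) hpT n

theorem MonotoneOn.antitone_iterate_of_map_le (hT : MonotoneOn T s) (hs : MapsTo T s s) {p : α}
    (hp : p ∈ s) (hTp : T p ≤ p) : Antitone fun n => T^[n] p :=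
  antitone_nat_of_succ_le fun n => by
    rw [iterate_succ_apply]
    exact hT.iterate_le_iterate hs (hs hp) hp hTp n

end Iterate

theorem IsClosed.mem_and_isFixedPt_of_tendsto_iterate {α : Type*} [TopologicalSpace α]
    [T2Space α] {s : Set α} (hs : IsClosed s) {T : α → α} (hTs : MapsTo T s s)
    (hT : ContinuousOn T s) {x y : α} (hx : x ∈ s)
    (hy : Tendsto (fun n => T^[n] x) atTop (𝓝 y)) : y ∈ s ∧ IsFixedPt T y := by
  have horbit : ∀ n, T^[n] x ∈ s := fun n => hTs.iterate n hx
  have hys : y ∈ s := hs.mem_of_tendsto hy (Eventually.of_forall horbit)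
  have hyw : Tendsto (fun n => T^[n] x) atTop (𝓝[s] y) :=
    tendsto_nhdsWithin_iff.2 ⟨hy, Eventually.of_forall horbit⟩
  refine ⟨hys, tendsto_nhds_unique (((hT y hys).tendsto.comp hyw).congr fun n => ?_)
    (hy.comp (tendsto_add_atTop_nat 1))⟩
  exact (iterate_succ_apply' T n x).symm

section Prod

variable {α β : Type*} [ConditionallyCompleteLinearOrder α] [TopologicalSpace α] [OrderTopology α]
  [ConditionallyCompleteLinearOrder β] [TopologicalSpace β] [OrderTopology β]

theorem Prod.exists_tendsto_of_monotone_of_le {u : ℕ → α × β} (hu : Monotone u) {B : α × β}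
    (hB : ∀ n, u n ≤ B) : ∃ p, Tendsto u atTop (𝓝 p) :=
  ⟨_, (tendsto_atTop_ciSup (monotone_fst.comp hu) ⟨B.1, forall_mem_range.2 fun n => (hB n).1⟩)
    |>.prodMk_nhds (tendsto_atTop_ciSup (monotone_snd.comp hu)
      ⟨B.2, forall_mem_range.2 fun n => (hB n).2⟩)⟩

theorem Prod.exists_tendsto_of_antitone_of_le {u : ℕ → α × β} (hu : Antitone u) {B : α × β}
    (hB : ∀ n, B ≤ u n) : ∃ p, Tendsto u atTop (𝓝 p) :=
  ⟨_, (tendsto_atTop_ciInf (monotone_fst.comp_antitone hu)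
      ⟨B.1, forall_mem_range.2 fun n => (hB n).1⟩)
    |>.prodMk_nhds (tendsto_atTop_ciInf (monotone_snd.comp_antitone hu)
      ⟨B.2, forall_mem_range.2 fun n => (hB n).2⟩)⟩

theorem Prod.tendsto_of_tendsto_of_tendsto_of_le_of_le {ι : Type*} {l : Filter ι}
    {u v w : ι → α × β} {p : α × β} (hu : Tendsto u l (𝓝 p)) (hw : Tendsto w l (𝓝 p))
    (huv : u ≤ v) (hvw : v ≤ w) : Tendsto v l (𝓝 p) :=
  (Prod.tendsto_iff v p).2
    ⟨_root_.tendsto_of_tendsto_of_tendsto_of_le_of_le hu.fst_nhds hw.fst_nhds (fun i => (huv i).1)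
      fun i => (hvw i).1,
    _root_.tendsto_of_tendsto_of_tendsto_of_le_of_le hu.snd_nhds hw.snd_nhds (fun i => (huv i).2)
      fun i => (hvw i).2⟩

theorem MonotoneOn.exists_isFixedPt_tendsto_iterate {lo hi : α × β} (hle : lo ≤ hi)
    {T : α × β → α × β} (hmono : MonotoneOn T (Icc lo hi)) (hmaps : MapsTo T (Icc lo hi) (Icc lo hi))
    (hcont : ContinuousOn T (Icc lo hi)) (huniq : (fixedPoints T ∩ Icc lo hi).Subsingleton) :
    ∃ p ∈ Icc lo hi, IsFixedPt T p ∧ ∀ q ∈ Icc lo hi, Tendsto (fun n => T^[n] q) atTop (𝓝 p) := by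
  have hlo : lo ∈ Icc lo hi := left_mem_Icc.2 hle
  have hhi : hi ∈ Icc lo hi := right_mem_Icc.2 hle
  obtain ⟨L, hL⟩ := Prod.exists_tendsto_of_monotone_of_le
    (hmono.monotone_iterate_of_le_map hmaps hlo (hmaps hlo).1) fun n => (hmaps.iterate n hlo).2
  obtain ⟨U, hU⟩ := Prod.exists_tendsto_of_antitone_of_le
    (hmono.antitone_iterate_of_map_le hmaps hhi (hmaps hhi).2) fun n => (hmaps.iterate n hhi).1
  obtain ⟨hLmem, hLfix⟩ := isClosed_Icc.mem_and_isFixedPt_of_tendsto_iterate hmaps hcont hlo hL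
  obtain ⟨hUmem, hUfix⟩ := isClosed_Icc.mem_and_isFixedPt_of_tendsto_iterate hmaps hcont hhi hU
  obtain rfl : L = U := huniq ⟨hLfix, hLmem⟩ ⟨hUfix, hUmem⟩
  exact ⟨L, hLmem, hLfix, fun q hq => Prod.tendsto_of_tendsto_of_tendsto_of_le_of_le hL hU
    (hmono.iterate_le_iterate hmaps hlo hq hq.1) (hmono.iterate_le_iterate hmaps hq hhi hq.2)⟩

end Prod

theorem monotoneOn_competitive_toDual {α β : Type*} [Preorder α] [Preorder β] {f : α → β → α}
    {g : α → β → β} {s : Set α} {t : Set β} (hfx : ∀ y ∈ t, MonotoneOn (fun x => f x y) s)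
    (hfy : ∀ x ∈ s, AntitoneOn (fun y => f x y) t) (hgy : ∀ x ∈ s, MonotoneOn (fun y => g x y) t)
    (hgx : ∀ y ∈ t, AntitoneOn (fun x => g x y) s) :
    MonotoneOn (fun p : α × βᵒᵈ => (f p.1 (ofDual p.2), toDual (g p.1 (ofDual p.2))))
      (s ×ˢ (ofDual ⁻¹' t)) := by
  rintro ⟨x, y⟩ ⟨hx, hy⟩ ⟨x', y'⟩ ⟨hx', hy'⟩ ⟨hxx', hy'y⟩
  exact ⟨(hfx y hy hx hx' hxx').trans (hfy x' hx' hy' hy hy'y),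
    (hgx y' hy' hx hx' hxx').trans (hgy x hx hy' hy hy'y)⟩

open Set Filter in
/-- M−m global attractivity theorem for competitive planar systems on a
rectangle: if `f : [a,b]×[c,d] → [a,b]` and `g : [a,b]×[c,d] → [c,d]` are
continuous, `f` is non-decreasing in `x` and non-increasing in `y`, `g` is
non-decreasing in `y` and non-increasing in `x`, and the only solutions of the
M−m system are diagonal, then `T = (f,g)` has a unique fixed point in
`[a,b]×[c,d]` which attracts all orbits. -/
theorem stmt17 (a b c d : ℝ) (hab : a ≤ b) (hcd : c ≤ d)
    (f g : ℝ → ℝ → ℝ)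
    (hfmaps : ∀ x ∈ Icc a b, ∀ y ∈ Icc c d, f x y ∈ Icc a b)
    (hgmaps : ∀ x ∈ Icc a b, ∀ y ∈ Icc c d, g x y ∈ Icc c d)
    (hfcont : ContinuousOn (fun p : ℝ × ℝ => f p.1 p.2) (Icc a b ×ˢ Icc c d))
    (hgcont : ContinuousOn (fun p : ℝ × ℝ => g p.1 p.2) (Icc a b ×ˢ Icc c d))
    (hfx : ∀ y ∈ Icc c d, MonotoneOn (fun x => f x y) (Icc a b))
    (hfy : ∀ x ∈ Icc a b, AntitoneOn (fun y => f x y) (Icc c d))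
    (hgy : ∀ x ∈ Icc a b, MonotoneOn (fun y => g x y) (Icc c d))
    (hgx : ∀ y ∈ Icc c d, AntitoneOn (fun x => g x y) (Icc a b))
    (hMm : ∀ m ∈ Icc a b, ∀ M ∈ Icc a b, ∀ mb ∈ Icc c d, ∀ Mb ∈ Icc c d,
      m = f m Mb → M = f M mb → mb = g M mb → Mb = g m Mb →
      m = M ∧ mb = Mb)
    (T : ℝ × ℝ → ℝ × ℝ) (hT : ∀ p : ℝ × ℝ, T p = (f p.1 p.2, g p.1 p.2)) :
    ∃ p : ℝ × ℝ, p ∈ Icc a b ×ˢ Icc c d ∧ T p = p ∧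
      (∀ q ∈ Icc a b ×ˢ Icc c d, T q = q → q = p) ∧
      (∀ q ∈ Icc a b ×ˢ Icc c d,
        Tendsto (fun n => T^[n] q) atTop (nhds p)) := by
  obtain rfl : T = fun p => (f p.1 p.2, g p.1 p.2) := funext hT
  -- `ℝ × ℝᵒᵈ` is definitionally `ℝ × ℝ`, topology included: `T` and its orbits are used there as is.
  have hbox : Icc ((a, toDual d) : ℝ × ℝᵒᵈ) (b, toDual c) = Icc a b ×ˢ (ofDual ⁻¹' Icc c d) := by
    rw [← Icc_prod_Icc, Icc_toDual]
  have huniq : (fixedPoints (fun p : ℝ × ℝ => (f p.1 p.2, g p.1 p.2)) ∩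
      Icc a b ×ˢ Icc c d).Subsingleton := by
    rintro ⟨m, Mb⟩ ⟨hfix, hm, hMb⟩ ⟨M, mb⟩ ⟨hfix', hM, hmb⟩
    obtain ⟨hm', hMb'⟩ := Prod.mk.inj hfix
    obtain ⟨hM', hmb'⟩ := Prod.mk.inj hfix'
    obtain ⟨rfl, rfl⟩ := hMm m hm M hM mb hmb Mb hMb hm'.symm hM'.symm hmb'.symm hMb'.symm
    rfl
  obtain ⟨p, hp, hfix, hattr⟩ := MonotoneOn.exists_isFixedPt_tendsto_iterate
    (Prod.mk_le_mk.2 ⟨hab, hcd⟩ : ((a, toDual d) : ℝ × ℝᵒᵈ) ≤ (b, toDual c))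
    (hbox ▸ monotoneOn_competitive_toDual hfx hfy hgy hgx)
    (hbox ▸ fun p hp => ⟨hfmaps _ hp.1 _ hp.2, hgmaps _ hp.1 _ hp.2⟩)
    (hbox ▸ hfcont.prodMk hgcont) (hbox ▸ huniq)
  rw [hbox] at hp hattr
  exact ⟨p, hp, hfix, fun q hq hfixq => huniq ⟨hfixq, hq⟩ ⟨hfix, hp⟩, hattr⟩
end

section
/- Let b₁, c₁, h₁, b₂, c₂, h₂ be positive reals satisfying 1 − b₁ + h₁ + c₁·h₂ ≥ 0 and 1 − b₂ + h₂ + c₂·h₁ ≥ 0, and define T on [0,∞)×[0,∞) by T(x,y) = (b₁·x/(1+x+c₁·y) + h₁, b₂·y/(1+y+c₂·x) + h₂). Then T has exactly one fixed point in [0,∞)×[0,∞). -/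
/-!
Put `x = h₁ + p`, `y = h₂ + q`, `A₁ = 1 - b₁ + h₁ + c₁h₂`, `A₂ = 1 - b₂ + h₂ + c₂h₁`,
`k₁ = b₁h₁`, `k₂ = b₂h₂`. The fixed points of `T` in the closed quadrant are exactly the points
with `p, q > 0`, `p (p + A₁ + c₁q) = k₁` and `q (q + A₂ + c₂p) = k₂`.

Existence: solving the second equation for `q` as the positive root of a quadratic, the first
equation becomes a continuous equation in `p` alone, solved by the intermediate value theorem.

Uniqueness: subtracting the equations of two solutions gives
`(p - p')(pp' + k₁) = c₁(q' - q)pp'` and its mirror image. If `p ≠ p'`, multiplying them gives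
`(pp' + k₁)(qq' + k₂) = c₁c₂ pp'qq'`. But `A₁, A₂ ≥ 0` give `c₁pq ≤ k₁` and `c₂p'q' ≤ k₂`, so the
right-hand side is at most `k₁k₂`, which is less than the left-hand side.
-/

noncomputable def posRoot (B k : ℝ) : ℝ := (√(B ^ 2 + 4 * k) - B) / 2

lemma posRoot_mul_add (B : ℝ) {k : ℝ} (hk : 0 ≤ k) : posRoot B k * (posRoot B k + B) = k := by
  have hsq := Real.sq_sqrt (show 0 ≤ B ^ 2 + 4 * k by positivity)
  unfold posRoot
  linear_combination hsq / 4

lemma posRoot_pos (B : ℝ) {k : ℝ} (hk : 0 < k) : 0 < posRoot B k := by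
  have : B < √(B ^ 2 + 4 * k) :=
    calc B ≤ |B| := le_abs_self B
      _ = √(B ^ 2) := (Real.sqrt_sq_eq_abs B).symm
      _ < √(B ^ 2 + 4 * k) := Real.sqrt_lt_sqrt (sq_nonneg B) (by linarith)
  unfold posRoot
  linarith

lemma continuous_posRoot (k : ℝ) : Continuous fun B ↦ posRoot B k := by
  unfold posRoot
  fun_prop

lemma div_add_eq_self_iff {b c h x y : ℝ} (hb : 0 < b) (hc : 0 ≤ c) (hh : 0 < h)
    (hx : 0 ≤ x) (hy : 0 ≤ y) :
    b * x / (1 + x + c * y) + h = x ↔ h < x ∧ (x - h) * (1 + x + c * y) = b * x := by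
  have hD : 0 < 1 + x + c * y := by positivity
  constructor
  · intro hfix
    have hxh : x - h = b * x / (1 + x + c * y) := by linarith
    have hx₀ : 0 < x := by linarith [div_nonneg (mul_nonneg hb.le hx) hD.le]
    refine ⟨by linarith [div_pos (mul_pos hb hx₀) hD], ?_⟩
    rw [hxh, div_mul_cancel₀ _ hD.ne']
  · rintro ⟨-, e⟩
    rw [← e, mul_div_cancel_right₀ _ hD.ne']
    ring

section ShiftedSystem

variable {A₁ A₂ c₁ c₂ k₁ k₂ : ℝ}

theorem exists_pos_solution (hc₁ : 0 ≤ c₁) (hk₁ : 0 < k₁) (hk₂ : 0 < k₂) :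
    ∃ p q : ℝ, 0 < p ∧ 0 < q ∧
      p * (p + A₁ + c₁ * q) = k₁ ∧ q * (q + A₂ + c₂ * p) = k₂ := by
  set Q : ℝ → ℝ := fun p ↦ posRoot (A₂ + c₂ * p) k₂
  set E : ℝ → ℝ := fun p ↦ p * (p + A₁ + c₁ * Q p)
  set r := posRoot A₁ k₁
  have hr : 0 < r := posRoot_pos A₁ hk₁
  have hE₀ : E 0 = 0 := by simp [E]
  have hEr : k₁ ≤ E r := by
    have hQ : 0 < Q r := posRoot_pos _ hk₂
    have : E r = r * (r + A₁) + c₁ * r * Q r := by ring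
    rw [this, posRoot_mul_add A₁ hk₁.le]
    linarith [mul_nonneg (mul_nonneg hc₁ hr.le) hQ.le]
  have hE : Continuous E := by
    have := continuous_posRoot k₂
    fun_prop
  obtain ⟨p, ⟨hp₀, -⟩, hEp⟩ :=
    intermediate_value_Icc hr.le hE.continuousOn ⟨by rw [hE₀]; exact hk₁.le, hEr⟩
  have hp : 0 < p := lt_of_le_of_ne hp₀ (by rintro rfl; linarith)
  refine ⟨p, Q p, hp, posRoot_pos _ hk₂, hEp, ?_⟩
  linear_combination posRoot_mul_add (A₂ + c₂ * p) hk₂.le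

lemma mul_mul_le_of_solution {p q : ℝ} (hA₁ : 0 ≤ A₁) (hp : 0 ≤ p)
    (e : p * (p + A₁ + c₁ * q) = k₁) : c₁ * (p * q) ≤ k₁ := by
  nlinarith [mul_nonneg hp hA₁]

lemma sub_mul_eq_of_solutions {p q p' q' : ℝ} (e : p * (p + A₁ + c₁ * q) = k₁)
    (e' : p' * (p' + A₁ + c₁ * q') = k₁) :
    (p - p') * (p * p' + k₁) = c₁ * (q' - q) * (p * p') := by
  linear_combination p' * e - p * e'

theorem eq_of_pos_solutions {p q p' q' : ℝ} (hA₁ : 0 ≤ A₁) (hA₂ : 0 ≤ A₂)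
    (hc₁ : 0 ≤ c₁) (hc₂ : 0 ≤ c₂) (hp : 0 < p) (hq : 0 < q) (hp' : 0 < p') (hq' : 0 < q')
    (e₁ : p * (p + A₁ + c₁ * q) = k₁) (e₂ : q * (q + A₂ + c₂ * p) = k₂)
    (e₁' : p' * (p' + A₁ + c₁ * q') = k₁) (e₂' : q' * (q' + A₂ + c₂ * p') = k₂) :
    p = p' ∧ q = q' := by
  have B₁ := mul_mul_le_of_solution hA₁ hp.le e₁
  have B₂ := mul_mul_le_of_solution hA₂ hq'.le e₂'
  have hk₁ : 0 ≤ k₁ := le_trans (by positivity) B₁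
  have hk₂ : 0 ≤ k₂ := le_trans (by positivity) B₂
  have R₁ := sub_mul_eq_of_solutions e₁ e₁'
  have R₂ := sub_mul_eq_of_solutions e₂ e₂'
  have hpp' : p = p' := by
    by_contra hne
    have hsign : 0 < (p - p') * (q' - q) := by
      have : 0 < c₁ * (p * p') * ((p - p') * (q' - q)) := by
        rw [show c₁ * (p * p') * ((p - p') * (q' - q)) = (p - p') ^ 2 * (p * p' + k₁) by
          linear_combination -(p - p') * R₁]
        exact mul_pos (pow_two_pos_of_ne_zero (sub_ne_zero.2 hne)) (by positivity)
      exact pos_of_mul_pos_right this (by positivity)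
    have hkey : (p * p' + k₁) * (q * q' + k₂) = c₁ * c₂ * (p * q * (p' * q')) :=
      mul_left_cancel₀ hsign.ne' (by
        linear_combination (q' - q) * (q * q' + k₂) * R₁ - c₁ * (q' - q) * (p * p') * R₂)
    have : c₁ * c₂ * (p * q * (p' * q')) ≤ k₁ * k₂ :=
      calc c₁ * c₂ * (p * q * (p' * q')) = (c₁ * (p * q)) * (c₂ * (q' * p')) := by ring
        _ ≤ k₁ * k₂ := mul_le_mul B₁ B₂ (by positivity) hk₁
    have : k₁ * k₂ < (p * p' + k₁) * (q * q' + k₂) := by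
      nlinarith [mul_pos (mul_pos hp hp') (mul_pos hq hq'), mul_nonneg (mul_pos hp hp').le hk₂,
        mul_nonneg (mul_pos hq hq').le hk₁]
    linarith
  refine ⟨hpp', ?_⟩
  subst hpp'
  have : (q - q') * (q * q' + k₂) = 0 := by linear_combination R₂
  rcases mul_eq_zero.1 this with h | h
  · linarith
  · linarith [mul_pos hq hq']

end ShiftedSystem

open Set in
/-- If `1 − b₁ + h₁ + c₁h₂ ≥ 0` and `1 − b₂ + h₂ + c₂h₁ ≥ 0`, then the map
`T(x,y) = (b₁x/(1+x+c₁y)+h₁, b₂y/(1+y+c₂x)+h₂)` has exactly one fixed point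
in `[0,∞)×[0,∞)`. -/
theorem stmt18 (b₁ c₁ h₁ b₂ c₂ h₂ : ℝ)
    (hb₁ : 0 < b₁) (hc₁ : 0 < c₁) (hh₁ : 0 < h₁)
    (hb₂ : 0 < b₂) (hc₂ : 0 < c₂) (hh₂ : 0 < h₂)
    (hcond₁ : 0 ≤ 1 - b₁ + h₁ + c₁ * h₂)
    (hcond₂ : 0 ≤ 1 - b₂ + h₂ + c₂ * h₁)
    (T : ℝ × ℝ → ℝ × ℝ)
    (hT : ∀ x y, T (x, y) =
      (b₁ * x / (1 + x + c₁ * y) + h₁, b₂ * y / (1 + y + c₂ * x) + h₂)) :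
    ∃! p : ℝ × ℝ, p ∈ Ici (0:ℝ) ×ˢ Ici (0:ℝ) ∧ T p = p := by
  obtain ⟨p, q, hp, hq, e₁, e₂⟩ := exists_pos_solution (A₁ := 1 - b₁ + h₁ + c₁ * h₂)
    (A₂ := 1 - b₂ + h₂ + c₂ * h₁) (c₂ := c₂) hc₁.le (mul_pos hb₁ hh₁) (mul_pos hb₂ hh₂)
  refine ⟨(h₁ + p, h₂ + q), ⟨⟨mem_Ici.2 (by positivity), mem_Ici.2 (by positivity)⟩, ?_⟩, ?_⟩
  · rw [hT, Prod.mk.injEq, div_add_eq_self_iff hb₁ hc₁.le hh₁ (by positivity) (by positivity),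
      div_add_eq_self_iff hb₂ hc₂.le hh₂ (by positivity) (by positivity)]
    exact ⟨⟨by linarith, by linear_combination e₁⟩, ⟨by linarith, by linear_combination e₂⟩⟩
  · rintro ⟨x, y⟩ ⟨⟨hx, hy⟩, hxy⟩
    rw [hT, Prod.mk.injEq, div_add_eq_self_iff hb₁ hc₁.le hh₁ hx hy,
      div_add_eq_self_iff hb₂ hc₂.le hh₂ hy hx] at hxy
    obtain ⟨⟨hx₁, e₁'⟩, hy₂, e₂'⟩ := hxy
    obtain ⟨hpx, hqy⟩ := eq_of_pos_solutions hcond₁ hcond₂ hc₁.le hc₂.le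
      (sub_pos.2 hx₁) (sub_pos.2 hy₂) hp hq
      (by linear_combination e₁') (by linear_combination e₂') e₁ e₂
    exact Prod.ext (by dsimp only; linarith) (by dsimp only; linarith)
end

section
/- Let b₁, c₁, h₁, b₂, c₂, h₂ be positive reals satisfying c₁·c₂ ≤ 1, and define T on [0,∞)×[0,∞) by T(x,y) = (b₁·x/(1+x+c₁·y) + h₁, b₂·y/(1+y+c₂·x) + h₂). Then T has exactly one fixed point in [0,∞)×[0,∞). -/
/-!
For fixed `y ≥ 0` the first coordinate equation `x = b₁x/(1+x+c₁y) + h₁` is a quadratic in `x`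
with exactly one positive root `X(y)`, which depends continuously on `y`; likewise for the second
coordinate, with root `Y(x)`. Since `0 < Y(x) ≤ h₂ + b₂`, the continuous map `Y ∘ X` has a fixed
point `y` in `[0, h₂ + b₂]`, and `(X y, y)` is a fixed point of `T`.

For uniqueness, subtracting the first coordinate equations at two fixed points gives
`(x₁ - x₂)(b₁h₁ + P) = c₁(y₂ - y₁)P` with `P = (x₁ - h₁)(x₂ - h₁) > 0`, hence
`|x₁ - x₂| < c₁|y₁ - y₂|` as soon as `x₁ ≠ x₂`, and symmetrically `|y₁ - y₂| < c₂|x₁ - x₂|`.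
Two distinct fixed points would give `|x₁ - x₂| < c₁c₂|x₁ - x₂| ≤ |x₁ - x₂|`.
-/

open Set

/-- The positive root `x` of `(x - h)(1 + x + c y) = b x` when `h > 0` and `1 + c y > 0`. -/
noncomputable def fixedCoord (b c h y : ℝ) : ℝ :=
  (b + h - (1 + c * y) + √((b + h - (1 + c * y)) ^ 2 + 4 * h * (1 + c * y))) / 2

section FixedCoord

variable {b c h y : ℝ}

lemma continuous_fixedCoord : Continuous (fixedCoord b c h) := by
  unfold fixedCoord
  fun_prop

lemma fixedCoord_sq (hh : 0 ≤ h) (hs : 0 ≤ 1 + c * y) :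
    fixedCoord b c h y ^ 2 =
      (b + h - (1 + c * y)) * fixedCoord b c h y + h * (1 + c * y) := by
  have hsqrt := Real.sq_sqrt
    (show 0 ≤ (b + h - (1 + c * y)) ^ 2 + 4 * h * (1 + c * y) by positivity)
  unfold fixedCoord
  linear_combination hsqrt / 4

lemma fixedCoord_pos (hh : 0 < h) (hs : 0 < 1 + c * y) : 0 < fixedCoord b c h y := by
  set B := b + h - (1 + c * y)
  have hB : |B| < √(B ^ 2 + 4 * h * (1 + c * y)) :=
    (Real.lt_sqrt (abs_nonneg B)).2 (by rw [sq_abs]; linarith [mul_pos hh hs])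
  unfold fixedCoord
  linarith [neg_abs_le B]

lemma fixedCoord_spec (hh : 0 < h) (hs : 0 < 1 + c * y) :
    b * fixedCoord b c h y / (1 + fixedCoord b c h y + c * y) + h = fixedCoord b c h y := by
  have hD : 0 < 1 + fixedCoord b c h y + c * y := by linarith [fixedCoord_pos (b := b) hh hs]
  rw [div_add' _ _ _ hD.ne', div_eq_iff hD.ne']
  linear_combination -fixedCoord_sq (b := b) hh.le hs.le

lemma fixedCoord_le (hb : 0 ≤ b) (hh : 0 < h) (hs : 0 < 1 + c * y) :
    fixedCoord b c h y ≤ h + b := by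
  have hr := fixedCoord_pos (b := b) hh hs
  have hfrac : b * fixedCoord b c h y / (1 + fixedCoord b c h y + c * y) ≤ b := by
    rw [div_le_iff₀ (by linarith)]
    nlinarith
  linarith [fixedCoord_spec (b := b) hh hs]

end FixedCoord

section Uniqueness

variable {b c h : ℝ}

lemma lt_of_div_add_eq {x D : ℝ} (hb : 0 < b) (hh : 0 < h) (hD : 0 < D) (hx : 0 ≤ x)
    (hfix : b * x / D + h = x) : h < x := by
  have hhx : h ≤ x := by linarith [div_nonneg (mul_nonneg hb.le hx) hD.le]
  linarith [div_pos (mul_pos hb (hh.trans_le hhx)) hD]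

lemma abs_sub_lt_of_fixed {x₁ y₁ x₂ y₂ : ℝ} (hb : 0 < b) (hh : 0 < h) (hc : 0 ≤ c)
    (hx₁ : 0 ≤ x₁) (hy₁ : 0 ≤ y₁) (hx₂ : 0 ≤ x₂) (hy₂ : 0 ≤ y₂)
    (hfix₁ : b * x₁ / (1 + x₁ + c * y₁) + h = x₁)
    (hfix₂ : b * x₂ / (1 + x₂ + c * y₂) + h = x₂) (hne : x₁ ≠ x₂) :
    |x₁ - x₂| < c * |y₁ - y₂| := by
  have hD₁ : 0 < 1 + x₁ + c * y₁ := by positivity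
  have hD₂ : 0 < 1 + x₂ + c * y₂ := by positivity
  have e₁ : (x₁ - h) * (1 + x₁ + c * y₁) = b * x₁ := by
    rw [← eq_sub_of_add_eq hfix₁, div_mul_cancel₀ _ hD₁.ne']
  have e₂ : (x₂ - h) * (1 + x₂ + c * y₂) = b * x₂ := by
    rw [← eq_sub_of_add_eq hfix₂, div_mul_cancel₀ _ hD₂.ne']
  set P := (x₁ - h) * (x₂ - h)
  have hP : 0 < P := mul_pos (by linarith [lt_of_div_add_eq hb hh hD₁ hx₁ hfix₁])
    (by linarith [lt_of_div_add_eq hb hh hD₂ hx₂ hfix₂])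
  have hdiff : (x₁ - x₂) * (b * h + P) = c * (y₂ - y₁) * P := by
    linear_combination (x₂ - h) * e₁ - (x₁ - h) * e₂
  have habs : |x₁ - x₂| * (b * h + P) = c * |y₁ - y₂| * P := by
    have := congrArg abs hdiff
    rwa [abs_mul, abs_mul, abs_mul, abs_of_pos (by positivity : 0 < b * h + P),
      abs_of_pos hP, abs_of_nonneg hc, abs_sub_comm y₂] at this
  have hpos : 0 < |x₁ - x₂| := abs_pos.2 (sub_ne_zero.2 hne)
  refine lt_of_mul_lt_mul_right (a := P) ?_ hP.le
  nlinarith [mul_pos hpos (mul_pos hb hh)]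

end Uniqueness

theorem exists_fixedPoint_LGIN (b₁ c₁ h₁ b₂ c₂ h₂ : ℝ) (hc₁ : 0 ≤ c₁) (hh₁ : 0 < h₁)
    (hb₂ : 0 ≤ b₂) (hc₂ : 0 ≤ c₂) (hh₂ : 0 < h₂) (T : ℝ × ℝ → ℝ × ℝ)
    (hT : ∀ x y, T (x, y) =
      (b₁ * x / (1 + x + c₁ * y) + h₁, b₂ * y / (1 + y + c₂ * x) + h₂)) :
    ∃ p ∈ Ici (0:ℝ) ×ˢ Ici (0:ℝ), T p = p := by
  have hX : ∀ y, 0 ≤ y → 0 < fixedCoord b₁ c₁ h₁ y := fun y hy =>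
    fixedCoord_pos hh₁ (by positivity)
  obtain ⟨y, ⟨hy, -⟩, hfix⟩ : ∃ y ∈ Icc 0 (h₂ + b₂),
      Function.IsFixedPt (fixedCoord b₂ c₂ h₂ ∘ fixedCoord b₁ c₁ h₁) y :=
    exists_mem_Icc_isFixedPt (continuous_fixedCoord.comp continuous_fixedCoord).continuousOn
      (by positivity) (fixedCoord_pos hh₂ (by have := hX 0 le_rfl; positivity)).le
      (fixedCoord_le hb₂ hh₂ (by have := hX (h₂ + b₂) (by positivity); positivity))
  have hx := hX y hy
  have hfix₂ :=
    fixedCoord_spec (b := b₂) hh₂ (by positivity : 0 < 1 + c₂ * fixedCoord b₁ c₁ h₁ y)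
  rw [show fixedCoord b₂ c₂ h₂ (fixedCoord b₁ c₁ h₁ y) = y from hfix] at hfix₂
  refine ⟨(fixedCoord b₁ c₁ h₁ y, y), ⟨hx.le, hy⟩, ?_⟩
  rw [hT, fixedCoord_spec hh₁ (by positivity), hfix₂]

theorem fixedPoint_LGIN_unique (b₁ c₁ h₁ b₂ c₂ h₂ : ℝ)
    (hb₁ : 0 < b₁) (hc₁ : 0 ≤ c₁) (hh₁ : 0 < h₁)
    (hb₂ : 0 < b₂) (hc₂ : 0 ≤ c₂) (hh₂ : 0 < h₂) (hcond : c₁ * c₂ ≤ 1)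
    (T : ℝ × ℝ → ℝ × ℝ)
    (hT : ∀ x y, T (x, y) =
      (b₁ * x / (1 + x + c₁ * y) + h₁, b₂ * y / (1 + y + c₂ * x) + h₂))
    {p q : ℝ × ℝ} (hp : p ∈ Ici (0:ℝ) ×ˢ Ici (0:ℝ)) (hq : q ∈ Ici (0:ℝ) ×ˢ Ici (0:ℝ))
    (hTp : T p = p) (hTq : T q = q) : p = q := by
  obtain ⟨x₁, y₁⟩ := p
  obtain ⟨x₂, y₂⟩ := q
  simp only [mem_prod, mem_Ici] at hp hq
  obtain ⟨hx₁, hy₁⟩ := hp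
  obtain ⟨hx₂, hy₂⟩ := hq
  rw [hT] at hTp hTq
  obtain ⟨hfx₁, hfy₁⟩ := Prod.mk.inj hTp
  obtain ⟨hfx₂, hfy₂⟩ := Prod.mk.inj hTq
  have hlt_x := abs_sub_lt_of_fixed hb₁ hh₁ hc₁ hx₁ hy₁ hx₂ hy₂ hfx₁ hfx₂
  have hlt_y := abs_sub_lt_of_fixed hb₂ hh₂ hc₂ hy₁ hx₁ hy₂ hx₂ hfy₁ hfy₂
  have hy : y₁ = y₂ := by
    by_contra hne
    have hy_lt := hlt_y hne
    have hx_ne : x₁ ≠ x₂ := by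
      rintro rfl
      exact (abs_nonneg _).not_gt (by simpa using hy_lt)
    refine lt_irrefl |x₁ - x₂| ?_
    calc |x₁ - x₂| < c₁ * |y₁ - y₂| := hlt_x hx_ne
      _ ≤ c₁ * (c₂ * |x₁ - x₂|) := mul_le_mul_of_nonneg_left hy_lt.le hc₁
      _ = c₁ * c₂ * |x₁ - x₂| := by ring
      _ ≤ |x₁ - x₂| := mul_le_of_le_one_left (abs_nonneg _) hcond
  have hx : x₁ = x₂ := by
    by_contra hne
    exact (abs_nonneg _).not_gt (by simpa [hy] using hlt_x hne)
  rw [hx, hy]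

open Set in
/-- If `c₁·c₂ ≤ 1`, then the map
`T(x,y) = (b₁x/(1+x+c₁y)+h₁, b₂y/(1+y+c₂x)+h₂)` has exactly one fixed point
in `[0,∞)×[0,∞)`. -/
theorem stmt19 (b₁ c₁ h₁ b₂ c₂ h₂ : ℝ)
    (hb₁ : 0 < b₁) (hc₁ : 0 < c₁) (hh₁ : 0 < h₁)
    (hb₂ : 0 < b₂) (hc₂ : 0 < c₂) (hh₂ : 0 < h₂)
    (hcond : c₁ * c₂ ≤ 1)
    (T : ℝ × ℝ → ℝ × ℝ)
    (hT : ∀ x y, T (x, y) =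
      (b₁ * x / (1 + x + c₁ * y) + h₁, b₂ * y / (1 + y + c₂ * x) + h₂)) :
    ∃! p : ℝ × ℝ, p ∈ Ici (0:ℝ) ×ˢ Ici (0:ℝ) ∧ T p = p := by
  obtain ⟨p, hp, hTp⟩ :=
    exists_fixedPoint_LGIN b₁ c₁ h₁ b₂ c₂ h₂ hc₁.le hh₁ hb₂.le hc₂.le hh₂ T hT
  exact ⟨p, ⟨hp, hTp⟩, fun q ⟨hq, hTq⟩ => fixedPoint_LGIN_unique b₁ c₁ h₁ b₂ c₂ h₂
    hb₁ hc₁.le hh₁ hb₂ hc₂.le hh₂ hcond T hT hq hp hTq hTp⟩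
end
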